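/- arXiv:2312.05474 — 10 statements merged into one kernel-verified Lean document; each statement's English description precedes it below -/
import Mathlib

section
/- Let q be a prime power, n a positive integer coprime to q, and 0 < t < q^m - 1. If μ is a common divisor of t and q^m - 1, then t is a coset leader of its q-cyclotomic coset modulo q^m - 1 if and only if t/μ is a coset leader of its q-cyclotomic coset modulo (q^m - 1)/μ. -/
/-- The q-cyclotomic coset of `a` modulo `N`. -/
def qCoset (q N a : ℕ) : Set ℕ := {b | ∃ j : ℕ, b = a * q ^ j % N}

/-- The coset leader: the smallest element of the q-cyclotomic coset of `a` modulo `N`. -/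
noncomputable def cosetLeader (q N a : ℕ) : ℕ := sInf (qCoset q N a)

/-- `a` is a coset leader modulo `N` if it is the minimum of its own coset. -/
def IsCosetLeader (q N a : ℕ) : Prop := a = cosetLeader q N a

lemma sInf_mul_image (μ : ℕ) (S : Set ℕ) (hS : S.Nonempty) :
    sInf ((μ * ·) '' S) = μ * sInf S := by
  apply le_antisymm
  · exact Nat.sInf_le ⟨sInf S, Nat.sInf_mem hS, rfl⟩
  · obtain ⟨x, hx, hxe⟩ := Nat.sInf_mem (hS.image (μ * ·))
    rw [← hxe]
    exact Nat.mul_le_mul_left μ (Nat.sInf_le hx)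

theorem stmt_0 (q n m t μ : ℕ) (hq : IsPrimePow q) (hn : 0 < n)
    (hcop : Nat.Coprime n q) (hm : 0 < m) (ht : 0 < t) (ht' : t < q ^ m - 1)
    (hμt : μ ∣ t) (hμN : μ ∣ q ^ m - 1) :
    IsCosetLeader q (q ^ m - 1) t ↔ IsCosetLeader q ((q ^ m - 1) / μ) (t / μ) := by
  obtain ⟨t', rfl⟩ := hμt
  obtain ⟨N', hN'⟩ := hμN
  have hμ : 0 < μ := Nat.pos_of_ne_zero (by rintro rfl; simp at ht)
  rw [hN', Nat.mul_div_cancel_left _ hμ, Nat.mul_div_cancel_left _ hμ]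
  have hcoset : qCoset q (μ * N') (μ * t') = (μ * ·) '' qCoset q N' t' := by
    ext b
    simp only [qCoset, Set.mem_image, Set.mem_setOf_eq]
    constructor
    · rintro ⟨j, rfl⟩
      exact ⟨t' * q ^ j % N', ⟨j, rfl⟩, by rw [mul_assoc, Nat.mul_mod_mul_left]⟩
    · rintro ⟨c, ⟨j, rfl⟩, rfl⟩
      exact ⟨j, by rw [mul_assoc, Nat.mul_mod_mul_left]⟩
  have hne : (qCoset q N' t').Nonempty := ⟨t' * q ^ 0 % N', 0, rfl⟩
  unfold IsCosetLeader cosetLeader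
  rw [hcoset, sInf_mul_image μ _ hne, mul_right_inj' hμ.ne']
end

section
/- Let q ≥ 2 be a prime power and m ≥ 2. Then (q-1)·q^(m-1) - 1 is the largest q-cyclotomic coset leader modulo q^m - 1; that is, (q-1)·q^(m-1) - 1 is a coset leader of its own q-cyclotomic coset modulo q^m - 1, and every integer c with (q-1)·q^(m-1) - 1 < c < q^m - 1 is not a coset leader. -/
theorem stmt_2 (q m : ℕ) (hq : IsPrimePow q) (hm : 2 ≤ m) :
    IsCosetLeader q (q ^ m - 1) ((q - 1) * q ^ (m - 1) - 1) ∧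
    ∀ c : ℕ, (q - 1) * q ^ (m - 1) - 1 < c → c < q ^ m - 1 →
      ¬ IsCosetLeader q (q ^ m - 1) c := by
  have hq2 : 2 ≤ q := hq.two_le
  set n := q ^ m - 1 with hn
  set X := q ^ (m - 1) with hX
  have hqm : q ^ m = q * X := by
    rw [hX, ← pow_succ']
    congr 1
    omega
  have hX1 : 2 ≤ X := by
    calc 2 ≤ q := hq2
    _ = q ^ 1 := (pow_one q).symm
    _ ≤ X := Nat.pow_le_pow_right (by omega) (by omega)
  have h2X : 2 * X ≤ q ^ m := by
    rw [hqm]; exact Nat.mul_le_mul_right X hq2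
  have hXn : X < n := by omega
  have hn2 : 3 ≤ n := by omega
  have hδ : (q - 1) * X - 1 = n - X := by
    have h1 : (q - 1) * X = q * X - X := by rw [Nat.sub_mul, one_mul]
    omega
  have hqmn : q ^ m % n = 1 := by
    have h1 : q ^ m = n + 1 := by omega
    rw [h1, Nat.add_mod_left, Nat.mod_eq_of_lt (by omega)]
  have hpow : ∀ a : ℕ, q ^ a % n = q ^ (a % m) := by
    intro a
    have h1 : a % m ≤ m - 1 := by
      have := Nat.mod_lt a (show 0 < m by omega); omega
    have hlt : q ^ (a % m) < n := by
      calc q ^ (a % m) ≤ X := Nat.pow_le_pow_right (by omega) h1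
      _ < n := hXn
    conv_lhs => rw [← Nat.div_add_mod a m, pow_add, pow_mul, Nat.mul_mod, Nat.pow_mod, hqmn,
      one_pow]
    rw [Nat.mod_eq_of_lt (by omega : (1:ℕ) < n), one_mul]
    simp [Nat.mod_eq_of_lt hlt]
  clear_value n X
  have hB : ∀ j, (n - X) * q ^ j % n = n - q ^ ((m - 1 + j) % m) := by
    intro j
    set e := q ^ ((m - 1 + j) % m) with he
    clear_value e
    have he1 : 1 ≤ e := by
      rw [he]; exact Nat.one_le_pow _ _ (by omega)
    have heX : e ≤ X := by
      rw [he, hX]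
      apply Nat.pow_le_pow_right (by omega)
      have := Nat.mod_lt (m - 1 + j) (show 0 < m by omega); omega
    have hemod : q ^ (m - 1 + j) % n = e := (hpow _).trans he.symm
    have hsum : (n - X) * q ^ j + q ^ (m - 1 + j) = n * q ^ j := by
      have h1 : q ^ (m - 1 + j) = X * q ^ j := by rw [pow_add, hX]
      have h2 : X * q ^ j ≤ n * q ^ j := Nat.mul_le_mul_right _ (le_of_lt hXn)
      rw [h1, Nat.sub_mul]
      omega
    have hr : (n - X) * q ^ j % n < n := Nat.mod_lt _ (by omega)
    have hdvd : n ∣ ((n - X) * q ^ j % n + e) := by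
      have h0 : ((n - X) * q ^ j + q ^ (m - 1 + j)) % n = 0 := by
        rw [hsum]; exact Nat.mul_mod_right _ _
      have h3 := Nat.add_mod ((n - X) * q ^ j) (q ^ (m - 1 + j)) n
      rw [h0, hemod] at h3
      exact Nat.dvd_of_mod_eq_zero h3.symm
    obtain ⟨k, hk⟩ := hdvd
    have hk1 : k = 1 := by
      rcases Nat.lt_or_ge k 2 with h | h
      · interval_cases k <;> omega
      · exfalso
        have : 2 * n ≤ n * k := by
          calc 2 * n = n * 2 := by ring
          _ ≤ n * k := Nat.mul_le_mul_left _ h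
        omega
    rw [hk1, mul_one] at hk
    omega
  rw [hδ]
  constructor
  · -- (n - X) is a coset leader
    have hmem : (n - X) ∈ qCoset q n (n - X) :=
      ⟨0, by simp [Nat.mod_eq_of_lt (show n - X < n by omega)]⟩
    show n - X = sInf (qCoset q n (n - X))
    apply le_antisymm
    · apply le_csInf ⟨_, hmem⟩
      rintro b ⟨j, rfl⟩
      rw [hB j]
      have : q ^ ((m - 1 + j) % m) ≤ X := by
        rw [hX]
        apply Nat.pow_le_pow_right (by omega)
        have := Nat.mod_lt (m - 1 + j) (show 0 < m by omega); omega
      omega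
    · exact Nat.sInf_le hmem
  · intro c hc1 hc2 hlead
    set t := n - c with ht
    clear_value t
    have ht1 : 1 ≤ t := by omega
    have htX : t < X := by omega
    have htq2 : 2 * t ≤ t * q := by
      calc 2 * t = t * 2 := by ring
      _ ≤ t * q := Nat.mul_le_mul_left _ hq2
    have htqn : t * q < n := by
      have h1 : t * q ≤ (X - 1) * q := Nat.mul_le_mul_right _ (by omega)
      have h2 : (X - 1) * q = q * X - q := by rw [Nat.sub_mul, one_mul, mul_comm]
      omega
    have hcq : c * q % n = n - t * q := by
      have h1 : c * q = n * (q - 1) + (n - t * q) := by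
        have h2 : n * (q - 1) + n = n * q := by
          have h5 : n ≤ n * q := Nat.le_mul_of_pos_right n (by omega)
          rw [Nat.mul_sub, mul_one]
          omega
        have h3 : c * q + t * q = n * q := by
          rw [← add_mul]; congr 1; omega
        have h4 : n * (q - 1) + (n - t * q) + t * q = n * q := by
          rw [add_assoc, Nat.sub_add_cancel (le_of_lt htqn)]
          exact h2
        exact Nat.add_right_cancel (h3.trans h4.symm)
      rw [h1, Nat.mul_add_mod, Nat.mod_eq_of_lt (by omega)]
    have hmem : c * q % n ∈ qCoset q n c := ⟨1, by rw [pow_one]⟩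
    have hle : sInf (qCoset q n c) ≤ c * q % n := Nat.sInf_le hmem
    unfold IsCosetLeader cosetLeader at hlead
    rw [← hlead] at hle
    omega
end

section
/- Let q be a prime power, s, m positive integers with s dividing m and m/s ≥ 3. Let t, u be positive integers with 1 ≤ t ≤ m/s - 2 and 1 ≤ u ≤ (q^(m-ts) - 1)/(q^s - 1) - 1. Then the coset leader of the q-cyclotomic coset of q^(ts) - 1 + (q^s - 1)·u·q^(ts) modulo q^m - 1 is greater than or equal to q^(ts+s) - 1. -/
/-!
Write `n = t s`, `v = (q^s - 1) u` and `a = (q^n - 1) + v q^n`. Multiplying by `q^j` modulo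
`q^m - 1` rotates the `m` base-`q` digits of `a`, so `a q^j mod (q^m - 1)` equals
`(a mod q^(m-j)) q^j + a / q^(m-j)`. Since `s ∣ n` and `s ∣ m`, every element of the coset is
divisible by `q^s - 1`.

If the `n` low digits `q - 1` of `a` are not split by the rotation (`j + n ≤ m`), the rotated
number is `(q^n - 1) c + w` with `0 < w < c`; as `q^s - 1` divides `q^n - 1` and the whole number,
it divides `w`, so `c > w ≥ q^s - 1` and the number is at least
`(q^n - 1) q^s + q^s - 1 = q^(n+s) - 1`.
Otherwise some digits `q - 1` wrap around to the top, and the rotation is at least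
`q^(m-1) ≥ q^(n+s)`.
-/

theorem mul_mod_mul_sub_one {P Q x : ℕ} (hx : x < P * Q - 1) :
    x * Q % (P * Q - 1) = x % P * Q + x / P := by
  have hP : 0 < P := Nat.pos_of_ne_zero (by rintro rfl; simp at hx)
  have hB : x / P < Q := Nat.div_lt_of_lt_mul (by omega)
  have hA : x % P < P := Nat.mod_lt x hP
  have hx' := Nat.mod_add_div x P
  generalize x % P = A at *
  generalize x / P = B at *
  subst hx'
  have hlt : A * Q + B < P * Q - 1 := by
    rw [Nat.lt_sub_iff_add_lt] at hx ⊢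
    rcases (Nat.succ_le_of_lt hA).lt_or_eq with hA' | rfl
    · nlinarith
    · have : B + 1 < Q := by nlinarith
      nlinarith
  have hxQ : (A + P * B) * Q = A * Q + B + B * (P * Q - 1) := by
    have : 1 ≤ P * Q := by omega
    zify [this]
    ring
  rw [hxQ, Nat.add_mul_mod_self_right, Nat.mod_eq_of_lt hlt]

theorem le_cosetLeader_of_forall_lt {q m a L : ℕ} (hq : 0 < q) (hm : 0 < m)
    (h : ∀ j < m, L ≤ a * q ^ j % (q ^ m - 1)) : L ≤ cosetLeader q (q ^ m - 1) a := by
  refine le_csInf ⟨_, 0, rfl⟩ ?_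
  rintro _ ⟨j, rfl⟩
  have hperiod : q ^ j ≡ q ^ (j % m) [MOD q ^ m - 1] := by
    have h1 : q ^ m ≡ 1 [MOD q ^ m - 1] := Nat.modEq_sub (Nat.one_le_pow _ _ hq)
    calc q ^ j = (q ^ m) ^ (j / m) * q ^ (j % m) := by rw [← pow_mul, ← pow_add, Nat.div_add_mod]
      _ ≡ 1 ^ (j / m) * q ^ (j % m) [MOD q ^ m - 1] := (h1.pow _).mul_right _
      _ = q ^ (j % m) := by rw [one_pow, one_mul]
  calc L ≤ a * q ^ (j % m) % (q ^ m - 1) := h _ (Nat.mod_lt j hm)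
    _ = a * q ^ j % (q ^ m - 1) := (hperiod.mul_left a).symm

section
variable {M : ℕ}

theorem sub_one_add_mul_div_self (v : ℕ) (hM : 0 < M) : (M - 1 + v * M) / M = v := by
  rw [Nat.add_mul_div_right _ _ hM, Nat.div_eq_of_lt (by omega), zero_add]

theorem sub_one_add_mul_mod_self (v : ℕ) (hM : 0 < M) : (M - 1 + v * M) % M = M - 1 := by
  rw [Nat.add_mul_mod_self_right, Nat.mod_eq_of_lt (by omega)]

theorem sub_one_add_mul_mod_mul (v p : ℕ) (hM : 0 < M) :
    (M - 1 + v * M) % (M * p) = M - 1 + M * (v % p) := by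
  rw [Nat.mod_mul, sub_one_add_mul_mod_self v hM, sub_one_add_mul_div_self v hM]

theorem sub_one_add_mul_div_mul (v p : ℕ) (hM : 0 < M) :
    (M - 1 + v * M) / (M * p) = v / p := by
  rw [← Nat.div_div_eq_div_mul, sub_one_add_mul_div_self v hM]

theorem sub_one_add_mul_mod_of_dvd {P : ℕ} (v : ℕ) (hM : 0 < M) (hPM : P ∣ M) :
    (M - 1 + v * M) % P = P - 1 := by
  rw [← Nat.mod_mod_of_dvd _ hPM, sub_one_add_mul_mod_self v hM]
  obtain ⟨c, rfl⟩ := hPM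
  have hP : 0 < P := Nat.pos_of_mul_pos_right hM
  have hc : 0 < c := Nat.pos_of_mul_pos_left hM
  have : P * c - 1 = P - 1 + P * (c - 1) := by
    zify [hP, hc, Nat.one_le_iff_ne_zero.2 (mul_pos hP hc).ne']
    ring
  rw [this, Nat.add_mul_mod_self_left, Nat.mod_eq_of_lt (by omega)]

end

theorem mul_sub_one_le_of_dvd {M K v₀ v₁ Q : ℕ} (hKM : K - 1 ∣ M - 1) (hv₁ : v₁ < Q)
    (hw : 0 < v₀ * Q + v₁) (hdvd : K - 1 ∣ (M - 1 + M * v₀) * Q + v₁) :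
    M * K - 1 ≤ (M - 1 + M * v₀) * Q + v₁ := by
  obtain _ | D := M
  · simp
  obtain _ | d := K
  · simp
  simp only [Nat.add_sub_cancel] at hKM hdvd ⊢
  have hsplit : (D + (D + 1) * v₀) * Q + v₁ = D * ((v₀ + 1) * Q) + (v₀ * Q + v₁) := by ring
  rw [hsplit] at hdvd ⊢
  have hdw : d ≤ v₀ * Q + v₁ :=
    Nat.le_of_dvd hw ((Nat.dvd_add_right (hKM.mul_right _)).1 hdvd)
  have hc : d + 1 ≤ (v₀ + 1) * Q := by nlinarith
  calc (D + 1) * (d + 1) - 1 = D * (d + 1) + d := by rw [add_mul, one_mul]; omega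
    _ ≤ D * ((v₀ + 1) * Q) + (v₀ * Q + v₁) := by gcongr

section
variable {q n s m v j : ℕ}

theorem pow_add_sub_one_le_mul_pow_mod_of_add_le (hq : 0 < q) (hsn : s ∣ n) (hsm : s ∣ m)
    (hv : 0 < v) (hvs : q ^ s - 1 ∣ v) (ha : q ^ n - 1 + v * q ^ n < q ^ m - 1)
    (hj : j + n ≤ m) :
    q ^ (n + s) - 1 ≤ (q ^ n - 1 + v * q ^ n) * q ^ j % (q ^ m - 1) := by
  have hdvd : q ^ s - 1 ∣ (q ^ n - 1 + v * q ^ n) * q ^ j % (q ^ m - 1) :=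
    (Nat.dvd_mod_iff (Nat.pow_sub_one_dvd_pow_sub_one q hsm)).2
      ((dvd_add (Nat.pow_sub_one_dvd_pow_sub_one q hsn) (hvs.mul_right _)).mul_right _)
  set p := q ^ (m - n - j)
  have hm : q ^ m = q ^ n * p * q ^ j := by rw [← pow_add, ← pow_add]; congr 1; omega
  have hqn : 0 < q ^ n := pow_pos hq n
  have hvlt : v < p * q ^ j := by
    refine Nat.lt_of_mul_lt_mul_right (a := q ^ n) ?_
    rw [show p * q ^ j * q ^ n = q ^ m by rw [hm]; ring]
    omega
  rw [hm] at ha hdvd ⊢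
  rw [mul_mod_mul_sub_one ha, sub_one_add_mul_mod_mul v p hqn,
    sub_one_add_mul_div_mul v p hqn] at hdvd ⊢
  rw [pow_add]
  refine mul_sub_one_le_of_dvd (Nat.pow_sub_one_dvd_pow_sub_one q hsn)
    (Nat.div_lt_of_lt_mul hvlt) (Nat.pos_of_ne_zero fun h0 => hv.ne' ?_) hdvd
  obtain ⟨hmod, hdiv⟩ := Nat.add_eq_zero_iff.1 h0
  rw [← Nat.mod_add_div v p, (Nat.mul_eq_zero.1 hmod).resolve_right (pow_pos hq j).ne', hdiv,
    mul_zero, add_zero]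

theorem pow_add_sub_one_le_mul_pow_mod_of_lt_add (hq : 2 ≤ q) (hnsm : n + s < m)
    (ha : q ^ n - 1 + v * q ^ n < q ^ m - 1) (hj : j < m) (hjn : m < j + n) :
    q ^ (n + s) - 1 ≤ (q ^ n - 1 + v * q ^ n) * q ^ j % (q ^ m - 1) := by
  set k := m - j
  have hm : q ^ m = q ^ k * q ^ j := by rw [← pow_add]; congr 1; omega
  rw [hm] at ha ⊢
  rw [mul_mod_mul_sub_one ha,
    sub_one_add_mul_mod_of_dvd v (pow_pos (by omega) n) (pow_dvd_pow q (by omega : k ≤ n))]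
  have hk : q ^ (k - 1) ≤ q ^ k - 1 := by
    have : 2 * q ^ (k - 1) ≤ q ^ k := by
      rw [show k = k - 1 + 1 by omega, pow_succ, Nat.add_sub_cancel, mul_comm]
      exact Nat.mul_le_mul_left _ hq
    have : 0 < q ^ (k - 1) := pow_pos (by omega) _
    omega
  calc q ^ (n + s) - 1 ≤ q ^ (k - 1 + j) :=
        (Nat.sub_le _ _).trans (Nat.pow_le_pow_right (by omega) (by omega))
    _ = q ^ (k - 1) * q ^ j := pow_add _ _ _
    _ ≤ (q ^ k - 1) * q ^ j := by gcongr
    _ ≤ _ := Nat.le_add_right _ _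

theorem pow_add_sub_one_le_mul_pow_mod (hq : 2 ≤ q) (hsn : s ∣ n) (hsm : s ∣ m)
    (hnsm : n + s < m) (hv : 0 < v) (hvs : q ^ s - 1 ∣ v)
    (ha : q ^ n - 1 + v * q ^ n < q ^ m - 1) (hj : j < m) :
    q ^ (n + s) - 1 ≤ (q ^ n - 1 + v * q ^ n) * q ^ j % (q ^ m - 1) := by
  rcases le_or_gt (j + n) m with hjn | hjn
  · exact pow_add_sub_one_le_mul_pow_mod_of_add_le (by omega) hsn hsm hv hvs ha hjn
  · exact pow_add_sub_one_le_mul_pow_mod_of_lt_add hq hnsm ha hj hjn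

end

theorem sub_one_add_mul_pow_lt {q n m v : ℕ} (hq : 0 < q) (hnm : n ≤ m)
    (hv : v + 1 < q ^ (m - n)) : q ^ n - 1 + v * q ^ n < q ^ m - 1 := by
  have hle : (v + 2) * q ^ n ≤ q ^ m := by
    rw [← Nat.sub_add_cancel hnm, pow_add]
    exact Nat.mul_le_mul_right _ hv
  have : 0 < q ^ n := pow_pos hq n
  rw [add_mul] at hle
  omega

theorem stmt_4_general (q s m t u : ℕ) (hq : IsPrimePow q) (hs : 0 < s) (hsm : s ∣ m)
    (hms : 3 ≤ m / s) (ht2 : t ≤ m / s - 2)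
    (hu1 : 1 ≤ u) (hu2 : u ≤ (q ^ (m - t * s) - 1) / (q ^ s - 1) - 1) :
    q ^ (t * s + s) - 1 ≤
      cosetLeader q (q ^ m - 1) (q ^ (t * s) - 1 + (q ^ s - 1) * u * q ^ (t * s)) := by
  have hq2 : 2 ≤ q := hq.two_le
  have hlen : t * s + s < m := by
    have : (t + 2) * s ≤ m := Nat.div_mul_cancel hsm ▸ Nat.mul_le_mul_right s (by omega)
    nlinarith
  have hqs : 1 < q ^ s := Nat.one_lt_pow hs.ne' (by omega)
  have hv : (q ^ s - 1) * u + 1 < q ^ (m - t * s) := by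
    have := (Nat.le_div_iff_mul_le (by omega)).1
      (show u + 1 ≤ (q ^ (m - t * s) - 1) / (q ^ s - 1) by omega)
    rw [add_mul, mul_comm] at this
    omega
  refine le_cosetLeader_of_forall_lt (by omega) (by omega) fun j hj => ?_
  exact pow_add_sub_one_le_mul_pow_mod hq2 (dvd_mul_left s t) hsm hlen
    (Nat.mul_pos (by omega) hu1) (dvd_mul_right _ _)
    (sub_one_add_mul_pow_lt (by omega) (by omega) hv) hj

theorem stmt_4 (q s m t u : ℕ) (hq : IsPrimePow q) (hs : 0 < s) (hsm : s ∣ m)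
    (hms : 3 ≤ m / s) (ht1 : 1 ≤ t) (ht2 : t ≤ m / s - 2)
    (hu1 : 1 ≤ u) (hu2 : u ≤ (q ^ (m - t * s) - 1) / (q ^ s - 1) - 1) :
    q ^ (t * s + s) - 1 ≤
      cosetLeader q (q ^ m - 1) (q ^ (t * s) - 1 + (q ^ s - 1) * u * q ^ (t * s)) :=
  stmt_4_general q s m t u hq hs hsm hms ht2 hu1 hu2
end

section
/- Let q be a prime power, s > 1 an integer, and m a multiple of s with m/s ≥ 3. For any integer t with 1 ≤ t ≤ m/s - 2, the integer q^(m-ts) + q^(m-ts-1) - q^(m-(t+1)s-1) - 1 is divisible by q^s - 1, and (q^(m-ts) + q^(m-ts-1) - q^(m-(t+1)s-1) - 1)/(q^s - 1) is a q-cyclotomic coset leader modulo (q^m - 1)/(q^s - 1). -/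
section CosetLeaderAux
set_option maxHeartbeats 4000000
set_option maxRecDepth 100000


lemma Hpow1 (q B A : ℕ) (hq : 2 ≤ q) (hBA : B + 1 ≤ A) : q^B + 1 ≤ q^A := by
  obtain ⟨g, rfl⟩ : ∃ g, A = B + 1 + g := ⟨A - (B+1), by omega⟩
  obtain ⟨a, rfl⟩ : ∃ a, q = a + 2 := ⟨q - 2, by omega⟩
  obtain ⟨p, hp⟩ : ∃ p, (a+2)^B = p + 1 := ⟨(a+2)^B - 1, by have := Nat.one_le_pow B (a+2) (by omega); omega⟩
  obtain ⟨G, hG⟩ : ∃ G, (a+2)^g = G + 1 := ⟨(a+2)^g - 1, by have := Nat.one_le_pow g (a+2) (by omega); omega⟩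
  have E : (a+2)^(B+1+g) = (a+2)^B * (a+2) * (a+2)^g := by ring
  rw [E, hp, hG]
  refine Nat.le.intro (k := p*a*G+2*p*G+a*G+2*G+p*a+p+a) ?_
  ring

lemma Hpow2 (q B C A : ℕ) (hq : 2 ≤ q) (hB : B + 1 ≤ A) (hC : C + 2 ≤ A) :
    q^B + q^C + 1 ≤ q^A := by
  obtain ⟨mm, rfl⟩ : ∃ mm, A = mm + 2 := ⟨A - 2, by omega⟩
  have h1 : q^B ≤ q^(mm+1) := Nat.pow_le_pow_right (by omega) (by omega)
  have h2 : q^C ≤ q^mm := Nat.pow_le_pow_right (by omega) (by omega)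
  have h3 : q^(mm+1) + q^mm + 1 ≤ q^(mm+2) := by
    obtain ⟨a, rfl⟩ : ∃ a, q = a + 2 := ⟨q - 2, by omega⟩
    obtain ⟨p, hp⟩ : ∃ p, (a+2)^mm = p + 1 := ⟨(a+2)^mm - 1, by have := Nat.one_le_pow mm (a+2) (by omega); omega⟩
    have E1 : (a+2)^(mm+1) = (a+2)^mm*(a+2) := by ring
    have E2 : (a+2)^(mm+2) = (a+2)^mm*((a+2)*(a+2)) := by ring
    rw [E1, E2, hp]
    refine Nat.le.intro (k := p*a^2+3*p*a+p+a^2+3*a) ?_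
    ring
  omega

lemma Hpow2c (q B C A : ℕ) (hq : 2 ≤ q) (hB : B + 1 ≤ A) (hC : C + 2 ≤ A) (hC1 : 1 ≤ C) :
    q^B + q^C + 2 ≤ q^A := by
  obtain ⟨mm, rfl⟩ : ∃ mm, A = mm + 3 := ⟨A - 3, by omega⟩
  have h1 : q^B ≤ q^(mm+2) := Nat.pow_le_pow_right (by omega) (by omega)
  have h2 : q^C ≤ q^(mm+1) := Nat.pow_le_pow_right (by omega) (by omega)
  have h3 : q^(mm+2) + q^(mm+1) + 2 ≤ q^(mm+3) := by
    obtain ⟨a, rfl⟩ : ∃ a, q = a + 2 := ⟨q - 2, by omega⟩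
    obtain ⟨p, hp⟩ : ∃ p, (a+2)^mm = p + 1 := ⟨(a+2)^mm - 1, by have := Nat.one_le_pow mm (a+2) (by omega); omega⟩
    have E1 : (a+2)^(mm+2) = (a+2)^mm*((a+2)*(a+2)) := by ring
    have E2 : (a+2)^(mm+1) = (a+2)^mm*(a+2) := by ring
    have E3 : (a+2)^(mm+3) = (a+2)^mm*((a+2)*(a+2)*(a+2)) := by ring
    rw [E1, E2, E3, hp]
    refine Nat.le.intro (k := p*a^3+5*p*a^2+7*p*a+2*p+a^3+5*a^2+7*a) ?_
    ring
  omega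

lemma Hpow3 (q B C D A : ℕ) (hq : 2 ≤ q) (hB : B + 1 ≤ A) (hC : C + 2 ≤ A) (hD : D + 3 ≤ A) :
    q^B + q^C + q^D ≤ q^A := by
  obtain ⟨mm, rfl⟩ : ∃ mm, A = mm + 3 := ⟨A - 3, by omega⟩
  have h1 : q^B ≤ q^(mm+2) := Nat.pow_le_pow_right (by omega) (by omega)
  have h2 : q^C ≤ q^(mm+1) := Nat.pow_le_pow_right (by omega) (by omega)
  have h3 : q^D ≤ q^mm := Nat.pow_le_pow_right (by omega) (by omega)
  have h4 : q^(mm+2) + q^(mm+1) + q^mm ≤ q^(mm+3) := by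
    obtain ⟨a, rfl⟩ : ∃ a, q = a + 2 := ⟨q - 2, by omega⟩
    obtain ⟨p, hp⟩ : ∃ p, (a+2)^mm = p + 1 := ⟨(a+2)^mm - 1, by have := Nat.one_le_pow mm (a+2) (by omega); omega⟩
    have E1 : (a+2)^(mm+2) = (a+2)^mm*((a+2)*(a+2)) := by ring
    have E2 : (a+2)^(mm+1) = (a+2)^mm*(a+2) := by ring
    have E3 : (a+2)^(mm+3) = (a+2)^mm*((a+2)*(a+2)*(a+2)) := by ring
    rw [E1, E2, E3, hp]
    refine Nat.le.intro (k := p*a^3+5*p*a^2+7*p*a+p+a^3+5*a^2+7*a+1) ?_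
    ring
  omega

lemma Hpow5 (q B C D E A : ℕ) (hq : 2 ≤ q) (hB : B + 2 ≤ A) (hC : C + 3 ≤ A)
    (hD : D + 2 ≤ A) (hE : E + 3 ≤ A) :
    q^B + q^C + q^D + q^E ≤ q^A := by
  obtain ⟨mm, rfl⟩ : ∃ mm, A = mm + 3 := ⟨A - 3, by omega⟩
  have h1 : q^B ≤ q^(mm+1) := Nat.pow_le_pow_right (by omega) (by omega)
  have h2 : q^C ≤ q^mm := Nat.pow_le_pow_right (by omega) (by omega)
  have h3 : q^D ≤ q^(mm+1) := Nat.pow_le_pow_right (by omega) (by omega)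
  have h4 : q^E ≤ q^mm := Nat.pow_le_pow_right (by omega) (by omega)
  have h5 : q^(mm+1) + q^mm + q^(mm+1) + q^mm ≤ q^(mm+3) := by
    obtain ⟨a, rfl⟩ : ∃ a, q = a + 2 := ⟨q - 2, by omega⟩
    obtain ⟨p, hp⟩ : ∃ p, (a+2)^mm = p + 1 := ⟨(a+2)^mm - 1, by have := Nat.one_le_pow mm (a+2) (by omega); omega⟩
    have E2 : (a+2)^(mm+1) = (a+2)^mm*(a+2) := by ring
    have E3 : (a+2)^(mm+3) = (a+2)^mm*((a+2)*(a+2)*(a+2)) := by ring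
    rw [E2, E3, hp]
    refine Nat.le.intro (k := p*a^3+6*p*a^2+10*p*a+2*p+a^3+6*a^2+10*a+2) ?_
    ring
  omega

lemma pow_mod_reduce (q m j A : ℕ) (hq : 2 ≤ q) (hm : 0 < m) :
    A * q^j % (q^m-1) = A * q^(j%m) % (q^m-1) := by
  conv_lhs => rw [← Nat.div_add_mod j m]
  have h1 : (1:ℕ) ≤ q^m := Nat.one_le_pow _ _ (by omega)
  have hQM : (q^m) ≡ 1 [MOD q^m - 1] := ((Nat.modEq_iff_dvd' h1).mpr dvd_rfl).symm
  have h2 : (q^m)^(j/m) * q^(j%m) ≡ 1^(j/m) * q^(j%m) [MOD q^m-1] :=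
    (hQM.pow _).mul_right _
  rw [one_pow, one_mul] at h2
  calc A * q ^ (m * (j / m) + j % m) % (q^m - 1)
      = A * ((q^m)^(j/m) * q^(j%m)) % (q^m-1) := by rw [pow_add, pow_mul]
    _ = A * q^(j%m) % (q^m-1) := (h2.mul_left A)

lemma mod_lower (Qm x v p a c2 c3 : ℕ) (hc : c3 + 1 ≤ c2)
    (h : x + p + c2 + c3 * Qm + Qm = c2 * Qm + c3 + v + 1)
    (hpv : p ≤ v) (hvM : v + 2 ≤ Qm + p) (hav : a + p ≤ v) :
    a ≤ x % (Qm - 1) := by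
  have hQm : 2 ≤ Qm := by linarith
  obtain ⟨M, rfl⟩ : ∃ M, Qm = M + 2 := ⟨Qm - 2, by omega⟩
  obtain ⟨cc, rfl⟩ : ∃ cc, c2 = cc + c3 + 1 := ⟨c2 - c3 - 1, by omega⟩
  obtain ⟨r, hr⟩ : ∃ r, v = r + p := ⟨v - p, by omega⟩
  have hexp : (cc + c3 + 1) * (M+2) = cc*(M+1) + c3*(M+2) + cc + M + 2 := by ring
  have hx : x = cc * (M+1) + r := by linarith
  have hrM : r < M + 1 := by omega
  have hfin : x % (M + 2 - 1) = r := by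
    have h21 : M + 2 - 1 = M + 1 := rfl
    rw [h21, hx, Nat.mul_add_mod', Nat.mod_eq_of_lt hrM]
  rw [hfin]; omega

lemma cert5 (q d e w : ℕ) (hq : 2 ≤ q)  :
    q^(2*d+4+e) + q^(2*d+3+e) + q^(2*d+3+e+w) + q^(d+2+w) + 1 ≤ q^(3*d+5+e+w) + q^(d+1+e) + 3 := by
  obtain ⟨a, rfl⟩ : ∃ a, q = a + 2 := ⟨q - 2, by omega⟩
  obtain ⟨b, hb⟩ : ∃ b, (a+2)^d = b + 1 := ⟨(a+2)^d - 1, by have := Nat.one_le_pow d (a+2) (by omega); omega⟩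
  obtain ⟨c, hc⟩ : ∃ c, (a+2)^e = c + 1 := ⟨(a+2)^e - 1, by have := Nat.one_le_pow e (a+2) (by omega); omega⟩
  obtain ⟨z, hz⟩ : ∃ z, (a+2)^w = z + 1 := ⟨(a+2)^w - 1, by have := Nat.one_le_pow w (a+2) (by omega); omega⟩
  have E1 : (a+2)^(2*d+4+e) = (a+2)^4*((a+2)^d)^2*(a+2)^e := by ring
  have E2 : (a+2)^(2*d+3+e) = (a+2)^3*((a+2)^d)^2*(a+2)^e := by ring
  have E3 : (a+2)^(2*d+3+e+w) = (a+2)^3*((a+2)^d)^2*(a+2)^e*(a+2)^w := by ring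
  have E4 : (a+2)^(d+2+w) = (a+2)^2*(a+2)^d*(a+2)^w := by ring
  have E5 : (a+2)^(3*d+5+e+w) = (a+2)^5*((a+2)^d)^3*(a+2)^e*(a+2)^w := by ring
  have E6 : (a+2)^(d+1+e) = (a+2)*(a+2)^d*(a+2)^e := by ring
  rw [E1, E2, E3, E4, E5, E6]
  rw [hb, hc, hz]
  refine Nat.le.intro (k := 20*z + 2*c + 24*c*z + 30*b + 76*b*z + 34*b*c + 80*b*c*z + 64*b^2 + 88*b^2*z + 64*b^2*c + 88*b^2*c*z + 32*b^3 + 32*b^3*z + 32*b^3*c + 32*b^3*c*z + 21*a + 64*a*z + 25*a*c + 68*a*c*z + 125*a*b + 212*a*b*z + 129*a*b*c + 216*a*b*c*z + 184*a*b^2 + 228*a*b^2*z + 184*a*b^2*c + 228*a*b^2*c*z + 80*a*b^3 + 80*a*b^3*z + 80*a*b^3*c + 80*a*b^3*c*z + 43*a^2 + 73*a^2*z + 44*a^2*c + 74*a^2*c*z + 167*a^2*b + 227*a^2*b*z + 168*a^2*b*c + 228*a^2*b*c*z + 204*a^2*b^2 + 234*a^2*b^2*z + 204*a^2*b^2*c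 + 234*a^2*b^2*c*z + 80*a^2*b^3 + 80*a^2*b^3*z + 80*a^2*b^3*c + 80*a^2*b^3*c*z + 30*a^3 + 39*a^3*z + 30*a^3*c + 39*a^3*c*z + 100*a^3*b + 118*a^3*b*z + 100*a^3*b*c + 118*a^3*b*c*z + 110*a^3*b^2 + 119*a^3*b^2*z + 110*a^3*b^2*c + 119*a^3*b^2*c*z + 40*a^3*b^3 + 40*a^3*b^3*z + 40*a^3*b^3*c + 40*a^3*b^3*c*z + 9*a^4 + 10*a^4*z + 9*a^4*c + 10*a^4*c*z + 28*a^4*b + 30*a^4*b*z + 28*a^4*b*c + 30*a^4*b*c*z + 29*a^4*b^2 + 30*a^4*b^2*z + 29*a^4*b^2*c + 30*a^4*b^2*c*z + 10*a^4*b^3 + 10*a^4*b^3*z + 10*a^4*b^3*c + 10*a^4*b^3*c*z + a^5 + a^5*z + a^5*c + a^5*c*z + 3*a^5*b + 3*a^5*b*z + 3*a^5*b*c + 3*a^5*b*c*z + 3*a^5*b^2 + 3*a^5*b^2*z + 3*a^5*b^2*c + 3*a^5*b^2*c*z + a^5*b^3 + a^5*b^3*z + a^5*b^3*c + a^5*b^3*c*z)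 ?_
  ring

lemma cert11 (q d e w : ℕ) (hq : 2 ≤ q)  :
    q^(2*d+4+e) + q^(2*d+3+e) + q^(3*d+5+e+w) + q^(2*d+4+w) ≤ q^(3*d+6+e+w) + q^(d+2) + q^(d+1) + q^(d+1+e) := by
  obtain ⟨a, rfl⟩ : ∃ a, q = a + 2 := ⟨q - 2, by omega⟩
  obtain ⟨b, hb⟩ : ∃ b, (a+2)^d = b + 1 := ⟨(a+2)^d - 1, by have := Nat.one_le_pow d (a+2) (by omega); omega⟩
  obtain ⟨c, hc⟩ : ∃ c, (a+2)^e = c + 1 := ⟨(a+2)^e - 1, by have := Nat.one_le_pow e (a+2) (by omega); omega⟩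
  obtain ⟨z, hz⟩ : ∃ z, (a+2)^w = z + 1 := ⟨(a+2)^w - 1, by have := Nat.one_le_pow w (a+2) (by omega); omega⟩
  have E1 : (a+2)^(2*d+4+e) = (a+2)^4*((a+2)^d)^2*(a+2)^e := by ring
  have E2 : (a+2)^(2*d+3+e) = (a+2)^3*((a+2)^d)^2*(a+2)^e := by ring
  have E3 : (a+2)^(3*d+5+e+w) = (a+2)^5*((a+2)^d)^3*(a+2)^e*(a+2)^w := by ring
  have E4 : (a+2)^(2*d+4+w) = (a+2)^4*((a+2)^d)^2*(a+2)^w := by ring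
  have E5 : (a+2)^(3*d+6+e+w) = (a+2)^6*((a+2)^d)^3*(a+2)^e*(a+2)^w := by ring
  have E6 : (a+2)^(d+2) = (a+2)^2*(a+2)^d := by ring
  have E7 : (a+2)^(d+1) = (a+2)*(a+2)^d := by ring
  have E8 : (a+2)^(d+1+e) = (a+2)*(a+2)^d*(a+2)^e := by ring
  rw [E1, E2, E3, E4, E5, E6, E7, E8]
  rw [hb, hc, hz]
  refine Nat.le.intro (k := 16*z + 10*c + 32*c*z + 24*b + 64*b*z + 50*b*c + 96*b*c*z + 56*b^2 + 80*b^2*z + 72*b^2*c + 96*b^2*c*z + 32*b^3 + 32*b^3*z + 32*b^3*c + 32*b^3*c*z + 42*a + 80*a*z + 69*a*c + 112*a*c*z + 190*a*b + 272*a*b*z + 249*a*b*c + 336*a*b*c*z + 260*a*b^2 + 304*a*b^2*z + 292*a*b^2*c + 336*a*b^2*c*z + 112*a*b^3 + 112*a*b^3*z + 112*a*b^3*c + 112*a*b^3*c*z + 107*a^2 + 136*a^2*z + 130*a^2*c + 160*a^2*c*z + 373*a^2*b + 432*a^2*b*z + 420*a^2*b*c + 480*a^2*b*c*z + 426*a^2*b^2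 + 456*a^2*b^2*z + 450*a^2*b^2*c + 480*a^2*b^2*c*z + 160*a^2*b^3 + 160*a^2*b^3*z + 160*a^2*b^3*c + 160*a^2*b^3*c*z + 103*a^3 + 112*a^3*z + 111*a^3*c + 120*a^3*c*z + 326*a^3*b + 344*a^3*b*z + 342*a^3*b*c + 360*a^3*b*c*z + 343*a^3*b^2 + 352*a^3*b^2*z + 351*a^3*b^2*c + 360*a^3*b^2*c*z + 120*a^3*b^3 + 120*a^3*b^3*z + 120*a^3*b^3*c + 120*a^3*b^3*c*z + 48*a^4 + 49*a^4*z + 49*a^4*c + 50*a^4*c*z + 146*a^4*b + 148*a^4*b*z + 148*a^4*b*c + 150*a^4*b*c*z + 148*a^4*b^2 + 149*a^4*b^2*z + 149*a^4*b^2*c + 150*a^4*b^2*c*z + 50*a^4*b^3 + 50*a^4*b^3*z + 50*a^4*b^3*c + 50*a^4*b^3*c*z + 11*a^5 + 11*a^5*z + 11*a^5*c + 11*a^5*c*z + 33*a^5*b + 33*a^5*b*z + 33*a^5*b*c + 33*a^5*b*c*z + 33*a^5*b^2 + 33*a^5*b^2*z + 33*a^5*b^2*c + 33*a^5*b^2*c*z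 + 11*a^5*b^3 + 11*a^5*b^3*z + 11*a^5*b^3*c + 11*a^5*b^3*c*z + a^6 + a^6*z + a^6*c + a^6*c*z + 3*a^6*b + 3*a^6*b*z + 3*a^6*b*c + 3*a^6*b*c*z + 3*a^6*b^2 + 3*a^6*b^2*z + 3*a^6*b^2*c + 3*a^6*b^2*c*z + a^6*b^3 + a^6*b^3*z + a^6*b^3*c + a^6*b^3*c*z) ?_
  ring

lemma core_lemma (q d e w : ℕ) (hq : 2 ≤ q) (j : ℕ) :
    q^(2*d+4+e) + q^(2*d+3+e) - q^(d+1+e) - 1 ≤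
      (q^(2*d+4+e) + q^(2*d+3+e) - q^(d+1+e) - 1) * q^j % (q^(3*d+6+e+w) - 1) := by
  rw [pow_mod_reduce q (3*d+6+e+w) j _ hq (by omega)]
  obtain ⟨J, hJeq⟩ : ∃ J, j % (3*d+6+e+w) = J := ⟨_, rfl⟩
  have hJ : J < 3*d+6+e+w := by rw [← hJeq]; exact Nat.mod_lt _ (by omega)
  rw [hJeq]
  set A := q^(2*d+4+e) + q^(2*d+3+e) - q^(d+1+e) - 1 with hAdef
  have hone : ∀ i : ℕ, 1 ≤ q^i := fun i => Nat.one_le_pow i q (by omega)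
  have hA : A + q^(d+1+e) + 1 = q^(2*d+4+e) + q^(2*d+3+e) := by
    have h1 := Hpow1 q (d+1+e) (2*d+3+e) hq (by omega)
    have h2 := hone (2*d+4+e)
    omega
  have hxJ : A * q^J + q^(d+1+e) * q^J + q^J = q^(2*d+4+e)*q^J + q^(2*d+3+e)*q^J := by
    have h0 : (A + q^(d+1+e) + 1) * q^J = (q^(2*d+4+e) + q^(2*d+3+e)) * q^J := by rw [hA]
    have e1 : (A + q^(d+1+e) + 1) * q^J = A * q^J + q^(d+1+e) * q^J + q^J := by ring
    have e2 : (q^(2*d+4+e) + q^(2*d+3+e)) * q^J = q^(2*d+4+e)*q^J + q^(2*d+3+e)*q^J := by ring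
    linarith
  rcases Nat.lt_or_ge J (d+2+w) with hR | hge
  · -- Region R1
    refine mod_lower (q^(3*d+6+e+w)) (A * q^J)
      (q^(2*d+4+e)*q^J + q^(2*d+3+e)*q^J + 1)
      (q^(d+1+e)*q^J + q^J + 1) A 1 0 (by omega) ?_ ?_ ?_ ?_
    · linarith [hxJ]
    · have g1 : q^(d+1+e)*q^J ≤ q^(2*d+4+e)*q^J :=
        Nat.mul_le_mul_right _ (Nat.pow_le_pow_right (by omega) (by omega))
      have g2 : q^J ≤ q^(2*d+3+e)*q^J := Nat.le_mul_of_pos_left _ (by positivity)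
      linarith
    · have g1 : q^(2*d+4+e)*q^J ≤ q^(2*d+4+e)*q^(d+1+w) :=
        Nat.mul_le_mul_left _ (Nat.pow_le_pow_right (by omega) (by omega))
      have g2 : q^(2*d+3+e)*q^J ≤ q^(2*d+3+e)*q^(d+1+w) :=
        Nat.mul_le_mul_left _ (Nat.pow_le_pow_right (by omega) (by omega))
      have g3 : q^(2*d+4+e)*q^(d+1+w) = q^(3*d+5+e+w) := by ring
      have g4 : q^(2*d+3+e)*q^(d+1+w) = q^(3*d+4+e+w) := by ring
      have g5 : q^(3*d+5+e+w) + q^(3*d+4+e+w) + 2 ≤ q^(3*d+6+e+w) :=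
        Hpow2c q _ _ _ hq (by omega) (by omega) (by omega)
      have g6 : 0 < q^(d+1+e)*q^J := by positivity
      have g7 : 0 < q^J := by positivity
      linarith
    · have g1 : A ≤ A * q^J := Nat.le_mul_of_pos_right _ (by positivity)
      linarith [hxJ, g1]
  · obtain ⟨k, rfl⟩ : ∃ k, J = d+2+w+k := ⟨J - (d+2+w), by omega⟩
    have hklt : k < 2*d+4+e := by omega
    rcases k with _ | kk
    · -- Region R2
      simp only [Nat.add_zero] at hxJ ⊢
      refine mod_lower (q^(3*d+6+e+w)) (A * q^(d+2+w))
        (q^(3*d+5+e+w) + 2)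
        (q^(2*d+3+e+w) + q^(d+2+w) + 1) A 2 0 (by omega) ?_ ?_ ?_ ?_
      · have hring : q^(2*d+4+e)*q^(d+2+w) + q^(2*d+3+e)*q^(d+2+w)
            + (q^(2*d+3+e+w) + q^(d+2+w) + 1) + 2 + 0*q^(3*d+6+e+w) + q^(3*d+6+e+w)
            = 2*q^(3*d+6+e+w) + 0 + (q^(3*d+5+e+w) + 2) + 1
              + (q^(d+1+e)*q^(d+2+w) + q^(d+2+w)) := by ring
        linarith [hxJ, hring]
      · exact le_trans (Hpow2 q (2*d+3+e+w) (d+2+w) (3*d+5+e+w) hq (by omega) (by omega)) (by omega)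
      · have g1 := Hpow1 q (3*d+5+e+w) (3*d+6+e+w) hq (by omega)
        have g2 : 2^3 ≤ q^(2*d+3+e+w) :=
          le_trans (Nat.pow_le_pow_left hq 3) (Nat.pow_le_pow_right (by omega) (by omega))
        have g3 := hone (d+2+w)
        omega
      · have g5 := cert5 q d e w hq
        omega
    · have hkk2 : kk ≤ 2*d+2+e := by omega
      rcases Nat.lt_or_ge kk (d+2) with hsm | hlg
      · -- Region R3
        refine mod_lower (q^(3*d+6+e+w)) (A * q^(d+2+w+(kk+1)))
          (q^(3*d+6+e+w) + q^(kk+1) + q^kk)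
          (q^(2*d+4+e+w+kk) + q^(d+3+w+kk) + 1) A (q^(kk+1) + q^kk) 0 ?_ ?_ ?_ ?_ ?_
        · have := hone (kk+1); have := hone kk; omega
        · have hring : q^(2*d+4+e)*q^(d+2+w+(kk+1)) + q^(2*d+3+e)*q^(d+2+w+(kk+1))
              + (q^(2*d+4+e+w+kk) + q^(d+3+w+kk) + 1) + (q^(kk+1) + q^kk)
              + 0*q^(3*d+6+e+w) + q^(3*d+6+e+w)
              = (q^(kk+1) + q^kk)*q^(3*d+6+e+w) + 0
                + (q^(3*d+6+e+w) + q^(kk+1) + q^kk) + 1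
                + (q^(d+1+e)*q^(d+2+w+(kk+1)) + q^(d+2+w+(kk+1))) := by ring
          linarith [hxJ, hring]
        · refine le_trans (Hpow2 q (2*d+4+e+w+kk) (d+3+w+kk) (3*d+6+e+w) hq (by omega) (by omega)) ?_
          have := hone (kk+1); have := hone kk; omega
        · have g1 := Hpow2 q (kk+1) kk (d+3+w+kk) hq (by omega) (by omega)
          have g2 := hone (2*d+4+e+w+kk)
          omega
        · rcases Nat.lt_or_ge kk (d+1) with hA1 | hA2
          · have g1 : q^(2*d+4+e) + q^(2*d+3+e) + q^(2*d+4+e+w+kk) + q^(d+3+w+kk)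
                ≤ q^(3*d+6+e+w) :=
              Hpow5 q _ _ _ _ _ hq (by omega) (by omega) (by omega) (by omega)
            have := hone (kk+1); have := hone kk; have := hone (d+1+e)
            omega
          · have hkd : kk = d+1 := by omega
            subst hkd
            have b1 : q^(2*d+4+e+w+(d+1)) = q^(3*d+5+e+w) := by
              rw [show 2*d+4+e+w+(d+1) = 3*d+5+e+w from by omega]
            have b2 : q^(d+3+w+(d+1)) = q^(2*d+4+w) := by
              rw [show d+3+w+(d+1) = 2*d+4+w from by omega]
            have b3 : q^((d+1)+1) = q^(d+2) := by
              rw [show (d+1)+1 = d+2 from by omega]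
            have g := cert11 q d e w hq
            omega
      · -- Region R4
        obtain ⟨u, rfl⟩ : ∃ u, kk = d+2+u := ⟨kk-(d+2), by omega⟩
        have hu : u ≤ d+e := by omega
        refine mod_lower (q^(3*d+6+e+w)) (A * q^(d+2+w+((d+2+u)+1)))
          (q^(3*d+6+e+w) + q^(d+3+u) + q^(d+2+u) + q^(3*d+6+e+w+u))
          (q^(3*d+6+e+w+u) + q^(2*d+5+w+u) + 1 + q^u)
          A (q^(d+3+u) + q^(d+2+u)) (q^u) ?_ ?_ ?_ ?_ ?_
        · have := Hpow1 q u (d+2+u) hq (by omega); have := hone (d+3+u); omega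
        · have hring : q^(2*d+4+e)*q^(d+2+w+((d+2+u)+1)) + q^(2*d+3+e)*q^(d+2+w+((d+2+u)+1))
              + (q^(3*d+6+e+w+u) + q^(2*d+5+w+u) + 1 + q^u)
              + (q^(d+3+u) + q^(d+2+u)) + q^u*q^(3*d+6+e+w) + q^(3*d+6+e+w)
              = (q^(d+3+u) + q^(d+2+u))*q^(3*d+6+e+w) + q^u
                + (q^(3*d+6+e+w) + q^(d+3+u) + q^(d+2+u) + q^(3*d+6+e+w+u)) + 1
                + (q^(d+1+e)*q^(d+2+w+((d+2+u)+1)) + q^(d+2+w+((d+2+u)+1))) := by ring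
          linarith [hxJ, hring]
        · have g1 : q^(2*d+5+w+u) + q^u + 1 ≤ q^(3*d+6+e+w) :=
            Hpow2 q _ _ _ hq (by omega) (by omega)
          have := hone (d+3+u); have := hone (d+2+u); omega
        · have g1 : q^(d+3+u) + q^(d+2+u) + 1 ≤ q^(2*d+5+w+u) :=
            Hpow2 q _ _ _ hq (by omega) (by omega)
          have := hone u; omega
        · have g1 : q^(2*d+5+w+u) + q^(2*d+4+e) + q^(2*d+3+e) ≤ q^(3*d+6+e+w) :=
            Hpow3 q _ _ _ _ hq (by omega) (by omega) (by omega)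
          have g2 : q^u ≤ q^(d+2+u) := Nat.pow_le_pow_right (by omega) (by omega)
          have := hone (d+3+u); have := hone (d+1+e)
          omega

end CosetLeaderAux

set_option maxHeartbeats 4000000 in
theorem stmt_5 (q s m t : ℕ) (hq : IsPrimePow q) (hs : 1 < s) (hsm : s ∣ m)
    (hms : 3 ≤ m / s) (ht1 : 1 ≤ t) (ht2 : t ≤ m / s - 2) :
    (q ^ s - 1) ∣ (q ^ (m - t * s) + q ^ (m - t * s - 1) - q ^ (m - (t + 1) * s - 1) - 1) ∧
    IsCosetLeader q ((q ^ m - 1) / (q ^ s - 1))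
      ((q ^ (m - t * s) + q ^ (m - t * s - 1) - q ^ (m - (t + 1) * s - 1) - 1) / (q ^ s - 1)) := by
  have hq2 : 2 ≤ q := hq.two_le
  obtain ⟨n, hn⟩ := hsm
  have hs0 : 0 < s := by omega
  have hdivn : m / s = n := by rw [hn]; exact Nat.mul_div_cancel_left n hs0
  rw [hdivn] at hms ht2
  obtain ⟨d, rfl⟩ : ∃ d, s = d + 2 := ⟨s - 2, by omega⟩
  obtain ⟨t1, rfl⟩ : ∃ t1, t = t1 + 1 := ⟨t - 1, by omega⟩
  obtain ⟨u2, rfl⟩ : ∃ u2, n = t1 + u2 + 3 := ⟨n - t1 - 3, by omega⟩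
  obtain ⟨e, he⟩ : ∃ e, u2 * (d+2) = e := ⟨_, rfl⟩
  obtain ⟨w, hw⟩ : ∃ w, t1 * (d+2) = w := ⟨_, rfl⟩
  obtain ⟨P1, hP1⟩ : ∃ P1, (t1+1)*(d+2) = P1 := ⟨_, rfl⟩
  obtain ⟨P2, hP2⟩ : ∃ P2, (t1+1+1)*(d+2) = P2 := ⟨_, rfl⟩
  rw [hP1, hP2]
  have hmE : m = P1 + (2*d+4+e) := by rw [← hP1, hn, ← he]; ring
  have hmE2 : m = P2 + (d+2+e) := by rw [← hP2, hn, ← he]; ring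
  have hm36 : m = 3*d+6+e+w := by rw [hn, ← he, ← hw]; ring
  rw [show m - P1 = 2*d+4+e from by omega]
  rw [show 2*d+4+e-1 = 2*d+3+e from by omega]
  rw [show m - P2 - 1 = d+1+e from by omega]
  rw [hm36]
  have hone : ∀ i : ℕ, 1 ≤ q^i := fun i => Nat.one_le_pow i q (by omega)
  have hsub : q^(d+1+e) + 1 ≤ q^(2*d+3+e) := Hpow1 q _ _ hq2 (by omega)
  have hq4 : 4 ≤ q^(d+2) := by
    have h4a : (2:ℕ)^2 ≤ 2^(d+2) := Nat.pow_le_pow_right (by omega) (by omega)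
    have h4b : (2:ℕ)^(d+2) ≤ q^(d+2) := Nat.pow_le_pow_left hq2 _
    have : (2:ℕ)^2 = 4 := by norm_num
    omega
  have hdvd1 : (q^(d+2) - 1) ∣ (q^(2*d+4+e) - 1) := by
    have h := Nat.sub_dvd_pow_sub_pow (q^(d+2)) 1 (u2+2)
    rw [one_pow, ← pow_mul] at h
    rw [show (d+2)*(u2+2) = 2*d+4+e from by rw [← he]; ring] at h
    exact h
  have hdvd2 : (q^(d+2) - 1) ∣ (q^(2*d+3+e) - q^(d+1+e)) := by
    obtain ⟨Qd, hQd⟩ : ∃ Qd, q^(d+2) = Qd + 1 := ⟨q^(d+2) - 1, by have := hone (d+2); omega⟩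
    have e1 : q^(d+1+e)*(Qd+1) = q^(2*d+3+e) := by rw [← hQd, ← pow_add]; congr 1; omega
    have e2 : q^(d+1+e)*(Qd+1) = q^(d+1+e)*Qd + q^(d+1+e) := by ring
    have hmul : q^(d+2) - 1 = Qd := by omega
    have e3 : q^(2*d+3+e) = q^(d+1+e)*Qd + q^(d+1+e) := by rw [← e1, e2]
    refine ⟨q^(d+1+e), ?_⟩
    rw [hmul, mul_comm Qd (q^(d+1+e))]
    exact Nat.sub_eq_of_eq_add e3
  have hdvdA : (q^(d+2) - 1) ∣ (q^(2*d+4+e) + q^(2*d+3+e) - q^(d+1+e) - 1) := by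
    have hsplit : q^(2*d+4+e) + q^(2*d+3+e) - q^(d+1+e) - 1
        = (q^(2*d+4+e) - 1) + (q^(2*d+3+e) - q^(d+1+e)) := by
      have := hone (2*d+4+e); have := hone (d+1+e); omega
    rw [hsplit]; exact dvd_add hdvd1 hdvd2
  refine ⟨hdvdA, ?_⟩
  have hdvdM : (q^(d+2) - 1) ∣ (q^(3*d+6+e+w) - 1) := by
    have h := Nat.sub_dvd_pow_sub_pow (q^(d+2)) 1 (t1+u2+3)
    rw [one_pow, ← pow_mul] at h
    rw [show (d+2)*(t1+u2+3) = 3*d+6+e+w from by rw [← he, ← hw]; ring] at h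
    exact h
  set Nn := (q^(3*d+6+e+w) - 1)/(q^(d+2) - 1) with hNdef
  set aa := (q^(2*d+4+e) + q^(2*d+3+e) - q^(d+1+e) - 1)/(q^(d+2) - 1) with hadef
  have hNmul : (q^(d+2) - 1) * Nn = q^(3*d+6+e+w) - 1 := Nat.mul_div_cancel' hdvdM
  have hamul : (q^(d+2) - 1) * aa = q^(2*d+4+e) + q^(2*d+3+e) - q^(d+1+e) - 1 :=
    Nat.mul_div_cancel' hdvdA
  have hcore : ∀ jj : ℕ, q^(2*d+4+e) + q^(2*d+3+e) - q^(d+1+e) - 1 ≤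
      (q^(2*d+4+e) + q^(2*d+3+e) - q^(d+1+e) - 1) * q^jj % (q^(3*d+6+e+w) - 1) :=
    fun jj => core_lemma q d e w hq2 jj
  have hS2 : q^(2*d+4+e) + q^(2*d+3+e) + 2 ≤ q^(3*d+6+e+w) :=
    Hpow2c q _ _ _ hq2 (by omega) (by omega) (by omega)
  have hAlt : (q^(d+2)-1)*aa < (q^(d+2)-1)*Nn := by
    rw [hamul, hNmul]; have := hone (d+1+e); omega
  have haN : aa < Nn := lt_of_mul_lt_mul_left hAlt (Nat.zero_le _)
  have hlb : ∀ b ∈ qCoset q Nn aa, aa ≤ b := by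
    rintro b hb
    simp only [qCoset, Set.mem_setOf_eq] at hb
    obtain ⟨jj, rfl⟩ := hb
    have h1 : (q^(d+2)-1) * (aa*q^jj % Nn) = ((q^(d+2)-1)*(aa*q^jj)) % ((q^(d+2)-1)*Nn) :=
      (Nat.mul_mod_mul_left _ _ _).symm
    rw [hNmul] at h1
    have h2 : (q^(d+2)-1)*(aa*q^jj) = (q^(2*d+4+e) + q^(2*d+3+e) - q^(d+1+e) - 1)*q^jj := by
      rw [← mul_assoc, hamul]
    rw [h2] at h1
    have h3 := hcore jj
    rw [← h1, ← hamul] at h3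
    exact Nat.le_of_mul_le_mul_left h3 (by omega)
  have hmem : aa ∈ qCoset q Nn aa := ⟨0, by rw [pow_zero, mul_one, Nat.mod_eq_of_lt haN]⟩
  show aa = cosetLeader q Nn aa
  exact le_antisymm (hlb _ (Nat.sInf_mem ⟨aa, hmem⟩)) (Nat.sInf_le hmem)
end

section
/- Let q be a prime power, λ a divisor of q - 1 with 1 ≤ λ, and m ≥ 2. Let 1 ≤ s ≤ (q-1)/λ - 1, 0 ≤ t ≤ m - 2, and 1 ≤ u ≤ (q^(m-t) - 1)/λ - s·q^(m-t-1) - 1. Then the coset leader of the q-cyclotomic coset of (λu + 1)·q^(t+1) - q + λs modulo q^m - 1 is strictly greater than q^(t+1) - q + λs. -/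
theorem Nat.ModEq.pow_mod_of_pow_eq_one {n q m : ℕ} (h : q ^ m ≡ 1 [MOD n]) (j : ℕ) :
    q ^ j ≡ q ^ (j % m) [MOD n] := by
  conv_lhs => rw [← Nat.div_add_mod j m, pow_add, pow_mul]
  simpa using (h.pow (j / m)).mul_right (q ^ (j % m))

theorem lt_cosetLeader_of_forall_lt {q N a b : ℕ} (h : ∀ j, b < a * q ^ j % N) :
    b < cosetLeader q N a := by
  obtain ⟨j, hj⟩ := Nat.sInf_mem (s := qCoset q N a) ⟨_, 0, rfl⟩
  rw [cosetLeader, hj]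
  exact h j

/-- Multiplying by `q ^ j` modulo `q ^ m - 1` rotates the `m` base-`q` digits of `v`. -/
theorem Nat.mul_pow_mod_pow_sub_one {q m j v : ℕ} (hj : j ≤ m) (hv : v < q ^ m - 1) :
    v * q ^ j % (q ^ m - 1) = v % q ^ (m - j) * q ^ j + v / q ^ (m - j) := by
  have hq : 0 < q := by
    rcases Nat.eq_zero_or_pos q with rfl | hq
    · rcases m with _ | m <;> simp at hv
    · exact hq
  have hsplit : q ^ (m - j) * q ^ j = q ^ m := by rw [← pow_add, Nat.sub_add_cancel hj]
  have hqk : 0 < q ^ (m - j) := by positivity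
  set lo := v % q ^ (m - j)
  set hi := v / q ^ (m - j)
  have hv_eq : hi * q ^ (m - j) + lo = v := by rw [mul_comm]; exact Nat.div_add_mod v _
  have hlo : lo + 1 ≤ q ^ (m - j) := Nat.mod_lt _ hqk
  have hqm : 1 ≤ q ^ m := Nat.one_le_pow _ _ hq
  have hsplitZ : (q : ℤ) ^ (m - j) * q ^ j = q ^ m := by exact_mod_cast hsplit
  have hrot : v * q ^ j = lo * q ^ j + hi + hi * (q ^ m - 1) := by
    rw [← hv_eq]
    zify [hqm]
    linear_combination (hi : ℤ) * hsplitZ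
  have hlt : lo * q ^ j + hi < q ^ m - 1 := by
    refine Nat.lt_of_mul_lt_mul_right (a := q ^ (m - j)) ?_
    have hmul : (lo * q ^ j + hi) * q ^ (m - j) = v + lo * (q ^ m - 1) := by
      rw [← hv_eq]
      zify [hqm]
      linear_combination (lo : ℤ) * hsplitZ
    rw [hmul]
    nlinarith [Nat.mul_le_mul_left (q ^ m - 1) hlo]
  rw [hrot, Nat.add_mul_mod_self_right, Nat.mod_eq_of_lt hlt]

theorem Nat.pow_sub_add_mod_pow {q k i d : ℕ} (hi : 0 < i) (hik : i ≤ k) (hdq : d < q) :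
    (q ^ k - q + d) % q ^ i = q ^ i - q + d := by
  have hq : 0 < q := by omega
  have hqi : q ≤ q ^ i := Nat.le_self_pow hi.ne' q
  have hik' : q ^ i ≤ q ^ k := Nat.pow_le_pow_right hq hik
  have hsplit : q ^ i * q ^ (k - i) = q ^ k := by rw [← pow_add, Nat.add_sub_cancel' hik]
  have hone : 1 ≤ q ^ (k - i) := Nat.one_le_pow _ _ hq
  have heq : q ^ k - q + d = q ^ i * (q ^ (k - i) - 1) + (q ^ i - q + d) := by
    have hsplitZ : (q : ℤ) ^ i * q ^ (k - i) = q ^ k := by exact_mod_cast hsplit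
    zify [hqi, hik', hone, hqi.trans hik']
    linear_combination -hsplitZ
  rw [heq, Nat.mul_add_mod, Nat.mod_eq_of_lt (by omega)]

theorem Nat.pow_pred_le_pow_sub_add {q i d : ℕ} (hi : 0 < i) (hd : 0 < d) :
    q ^ (i - 1) ≤ q ^ i - q + d := by
  obtain ⟨i, rfl⟩ := Nat.exists_eq_add_of_lt hi
  rcases Nat.eq_zero_or_pos q with rfl | hq
  · rcases i with _ | i
    · simpa using Nat.one_le_iff_ne_zero.mpr hd.ne'
    · simp
  have h1 : 1 ≤ q ^ i := Nat.one_le_pow _ _ hq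
  rw [show 0 + i + 1 - 1 = i by omega, zero_add, pow_succ]
  have : q ^ i + q ≤ q ^ i * q + 1 := by nlinarith
  omega

theorem lt_mul_pow_mod_of_mod_pow_eq {q m k d v b j : ℕ} (hv : v < q ^ m - 1) (hj : j < m)
    (hk : k < m) (hd : 0 < d) (hdq : d < q) (hvk : v % q ^ k = q ^ k - q + d) (hbv : b < v)
    (hbk : b ≤ q ^ k - q + d) : b < v * q ^ j % (q ^ m - 1) := by
  rcases Nat.eq_zero_or_pos j with rfl | hj0
  · rwa [pow_zero, mul_one, Nat.mod_eq_of_lt hv]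
  have hq : 0 < q := hd.trans hdq
  have hqj : 1 < q ^ j := Nat.one_lt_pow hj0.ne' (by omega)
  rw [Nat.mul_pow_mod_pow_sub_one hj.le hv]
  refine lt_of_lt_of_le ?_ (Nat.le_add_right _ _)
  by_cases hkj : k ≤ m - j
  · have hlow : q ^ k - q + d ≤ v % q ^ (m - j) := by
      rw [← hvk, ← Nat.mod_mod_of_dvd v (pow_dvd_pow q hkj)]
      exact Nat.mod_le _ _
    calc b ≤ q ^ k - q + d := hbk
      _ < (q ^ k - q + d) * q ^ j := lt_mul_of_one_lt_right (by omega) hqj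
      _ ≤ v % q ^ (m - j) * q ^ j := Nat.mul_le_mul_right _ hlow
  · have hlow : v % q ^ (m - j) = q ^ (m - j) - q + d := by
      rw [← Nat.mod_mod_of_dvd v (pow_dvd_pow q (le_of_not_ge hkj)), hvk,
        Nat.pow_sub_add_mod_pow (by omega) (by omega) hdq]
    have hqk : q ^ k ≤ q ^ (m - 1) := Nat.pow_le_pow_right hq (by omega)
    have hqk' : q ≤ q ^ k := Nat.le_self_pow (by omega) q
    calc b < q ^ k := by omega
      _ ≤ q ^ (m - 1) := hqk
      _ = q ^ (m - j - 1) * q ^ j := by rw [← pow_add]; congr 1; omega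
      _ ≤ v % q ^ (m - j) * q ^ j := by
        rw [hlow]; exact Nat.mul_le_mul_right _ (Nat.pow_pred_le_pow_sub_add (by omega) hd)

theorem Nat.mul_add_sub_add_lt_mul_sub_one {q Q P A e : ℕ} (hqP : q ≤ P) (he : e < q)
    (hA : A < Q) (hAe : e * Q + A + 2 ≤ Q * q) : A * P + (P - q + e) < Q * P - 1 := by
  rcases Nat.lt_or_ge (e + 1) q with hlt | hge
  · have := Nat.mul_le_mul_right P (show A + 1 ≤ Q by omega)
    rw [add_mul, one_mul] at this
    omega
  · have := Nat.mul_le_mul_right P (show A + 2 ≤ Q by nlinarith)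
    rw [add_mul] at this
    omega

theorem lt_cosetLeader_succ_mul_pow_sub_add {q m k c w : ℕ} (hk0 : 0 < k) (hk : k < m)
    (hc : 0 < c) (hw : 0 < w) (hwc : w + c * q ^ (m - k) + 2 ≤ q ^ (m - k + 1)) :
    q ^ k - q + c < cosetLeader q (q ^ m - 1) ((w + 1) * q ^ k - q + c) := by
  have hq : 2 ≤ q := by
    by_contra! hq
    interval_cases q <;> simp_all
  have hsplit : q ^ (m - k) * q ^ k = q ^ m := by rw [← pow_add, Nat.sub_add_cancel hk.le]
  have hqk : q ≤ q ^ k := Nat.le_self_pow hk0.ne' q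
  have hQ0 : 0 < q ^ (m - k) := by positivity
  have hqm : 1 ≤ q ^ m := Nat.one_le_pow _ _ (by omega)
  rw [pow_succ] at hwc
  obtain ⟨H, A, hw_eq, hAQ⟩ : ∃ H A, H * q ^ (m - k) + A = w ∧ A < q ^ (m - k) :=
    ⟨w / q ^ (m - k), w % q ^ (m - k), by rw [mul_comm]; exact Nat.div_add_mod w _,
      Nat.mod_lt w hQ0⟩
  have hcH : c + H < q := by
    refine Nat.lt_of_mul_lt_mul_right (a := q ^ (m - k)) ?_
    nlinarith
  obtain ⟨v, hv⟩ : ∃ v, v = A * q ^ k + (q ^ k - q + (c + H)) := ⟨_, rfl⟩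
  have hav : (w + 1) * q ^ k - q + c = v + H * (q ^ m - 1) := by
    have hsplitZ : (q : ℤ) ^ (m - k) * q ^ k = q ^ m := by exact_mod_cast hsplit
    rw [hv, ← hw_eq]
    zify [hqm, hqk, hqk.trans (Nat.le_mul_of_pos_left (q ^ k) (Nat.succ_pos _))]
    linear_combination (H : ℤ) * hsplitZ
  have hvN : v < q ^ m - 1 := by
    rw [hv, ← hsplit]
    exact Nat.mul_add_sub_add_lt_mul_sub_one hqk hcH hAQ (by rw [add_mul]; omega)
  have hvk : v % q ^ k = q ^ k - q + (c + H) := by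
    rw [hv, Nat.mul_comm A, Nat.mul_add_mod, Nat.mod_eq_of_lt (by omega)]
  have hbv : q ^ k - q + c < v := by
    rcases Nat.eq_zero_or_pos H with hH | hH
    · have := Nat.le_mul_of_pos_left (q ^ k) (show 0 < A by rw [hH] at hw_eq; omega)
      omega
    · omega
  apply lt_cosetLeader_of_forall_lt
  intro j
  have hrot : ((w + 1) * q ^ k - q + c) * q ^ j ≡ v * q ^ (j % m) [MOD q ^ m - 1] := by
    rw [hav]
    exact Nat.ModEq.mul (Nat.add_mul_mod_self_right v H _)
      ((Nat.modEq_sub hqm).pow_mod_of_pow_eq_one j)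
  rw [hrot]
  exact lt_mul_pow_mod_of_mod_pow_eq hvN (Nat.mod_lt j (by omega)) hk (by omega) hcH hvk hbv
    (by omega)

theorem stmt_7_general (q m lam s t u : ℕ) (hl1 : 1 ≤ lam) (hm : 2 ≤ m)
    (hs1 : 1 ≤ s) (ht : t ≤ m - 2)
    (hu1 : 1 ≤ u) (hu2 : u ≤ (q ^ (m - t) - 1) / lam - s * q ^ (m - t - 1) - 1) :
    q ^ (t + 1) - q + lam * s <
      cosetLeader q (q ^ m - 1) ((lam * u + 1) * q ^ (t + 1) - q + lam * s) := by
  have hexp : m - (t + 1) + 1 = m - t := by omega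
  have hbound : lam * (u + s * q ^ (m - t - 1) + 1) ≤ q ^ (m - t) - 1 :=
    (Nat.mul_le_mul_left lam (by omega)).trans (Nat.mul_div_le _ lam)
  refine lt_cosetLeader_succ_mul_pow_sub_add (by omega) (by omega) (by positivity)
    (by positivity) ?_
  rw [hexp, ← Nat.sub_sub]
  rw [mul_add, mul_add, mul_one, ← mul_assoc] at hbound
  omega

theorem stmt_7 (q m lam s t u : ℕ) (hq : IsPrimePow q) (hl : lam ∣ q - 1)
    (hl1 : 1 ≤ lam) (hl2 : lam < q - 1) (hm : 2 ≤ m)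
    (hs1 : 1 ≤ s) (hs2 : s ≤ (q - 1) / lam - 1) (ht : t ≤ m - 2)
    (hu1 : 1 ≤ u) (hu2 : u ≤ (q ^ (m - t) - 1) / lam - s * q ^ (m - t - 1) - 1) :
    q ^ (t + 1) - q + lam * s <
      cosetLeader q (q ^ m - 1) ((lam * u + 1) * q ^ (t + 1) - q + lam * s) :=
  stmt_7_general q m lam s t u hl1 hm hs1 ht hu1 hu2
end

section
/- Let q > 3 be a prime power, λ an integer with 1 < λ < q - 1 and λ dividing q - 1, and m ≥ 2. Then λ divides q^m - 1 - ((λ-1)q + 1)·q^(m-2), and the quotient (q^m - 1 - ((λ-1)q + 1)·q^(m-2))/λ is a q-cyclotomic coset leader modulo (q^m - 1)/λ. -/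
/-!
Write `N = (q^m - 1)/λ`, `D = ((λ-1)q + 1)/λ` and `c = D q^(m-2)`, so that the number in question
is `N - c`. Since `(N - c) q^j ≡ -(c q^j) (mod N)`, it is a coset leader as soon as `c` is the
largest element of its own coset and no element of that coset vanishes. As `q^m ≡ 1 (mod N)`,
the coset of `c` consists of the residues of `D q^k` for `k < m`: for `k ≤ m - 2` these are the
numbers `D q^k ≤ c < N` themselves, and for `k = m - 1` the residue is
`(q^(m-1) + λ - 1)/λ`, which lies between `1` and `c` because `λ ≥ 2`.
-/

theorem self_mem_qCoset {q N a : ℕ} (ha : a < N) : a ∈ qCoset q N a :=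
  ⟨0, by simp [Nat.mod_eq_of_lt ha]⟩

theorem isCosetLeader_of_forall_le {q N a : ℕ} (ha : a < N) (h : ∀ j, a ≤ a * q ^ j % N) :
    IsCosetLeader q N a :=
  le_antisymm (le_csInf ⟨a, self_mem_qCoset ha⟩ (by rintro b ⟨j, rfl⟩; exact h j))
    (Nat.sInf_le (self_mem_qCoset ha))

theorem mul_mod_eq_sub_of_add_eq {N a c x : ℕ} (hac : a + c = N) (hx : 0 < c * x % N) :
    a * x % N = N - c * x % N := by
  rcases Nat.eq_zero_or_pos N with rfl | hN
  · obtain rfl : a = 0 := by omega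
    simp
  have hdvd : N ∣ a * x % N + c * x % N := by
    rw [Nat.dvd_iff_mod_eq_zero, ← Nat.add_mod, ← add_mul, hac, Nat.mul_mod_right]
  have := Nat.eq_of_dvd_of_lt_two_mul (by omega) hdvd
    (by have := Nat.mod_lt (a * x) hN; have := Nat.mod_lt (c * x) hN; omega)
  omega

theorem isCosetLeader_sub {q N c : ℕ} (hcN : c ≤ N)
    (h : ∀ j, c * q ^ j % N ∈ Set.Ioc 0 c) : IsCosetLeader q N (N - c) := by
  have hc : 0 < c := by simpa using (h 0).1.trans_le (h 0).2
  refine isCosetLeader_of_forall_le (by omega) fun j => ?_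
  rw [mul_mod_eq_sub_of_add_eq (Nat.sub_add_cancel hcN) (h j).1]
  exact Nat.sub_le_sub_left (h j).2 N

theorem mul_pow_modEq_mul_pow_mod {q N m : ℕ} (h : q ^ m ≡ 1 [MOD N]) (x s : ℕ) :
    x * q ^ s ≡ x * q ^ (s % m) [MOD N] := by
  conv_lhs => rw [← Nat.div_add_mod s m, pow_add, pow_mul]
  simpa using ((h.pow (s / m)).mul_right (q ^ (s % m))).mul_left x

theorem mul_pow_lt {q t lam N D : ℕ} (hlq : lam < q) (hN : lam * N + 1 = q ^ (t + 2))
    (hD : lam * D = (lam - 1) * q + 1) : D * q ^ t < N := by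
  obtain ⟨u, rfl⟩ : ∃ u, lam = u + 1 :=
    Nat.exists_eq_add_one.mpr (Nat.pos_of_ne_zero (by rintro rfl; simp at hD))
  have hP : 1 ≤ q ^ t := Nat.one_le_pow _ _ (by omega)
  have hlam : (u + 1) * (D * q ^ t) = (u * q + 1) * q ^ t := by
    rw [← mul_assoc, hD, Nat.add_sub_cancel]
  have hq2 : q ^ (t + 2) = q ^ t * q * q := by ring
  have hu : (u + 2) * (q * q ^ t) ≤ q * (q * q ^ t) := Nat.mul_le_mul_right _ (by omega)
  refine Nat.lt_of_mul_lt_mul_left (a := u + 1) ?_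
  nlinarith

theorem mul_pow_mod_mem_Ioc {q t lam N D k : ℕ} (hl1 : 1 < lam) (hlq : lam < q)
    (hN : lam * N + 1 = q ^ (t + 2)) (hD : lam * D = (lam - 1) * q + 1) (hk : k < t + 2) :
    D * q ^ k % N ∈ Set.Ioc 0 (D * q ^ t) := by
  have hcN := mul_pow_lt hlq hN hD
  obtain ⟨u, rfl⟩ : ∃ u, lam = u + 1 := ⟨lam - 1, by omega⟩
  rw [Nat.add_sub_cancel] at hD
  have hD0 : 0 < D := Nat.pos_of_ne_zero (by rintro rfl; simp at hD)
  have hP : 1 ≤ q ^ t := Nat.one_le_pow _ _ (by omega)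
  rcases Nat.lt_succ_iff_lt_or_eq.mp hk with hk | rfl
  · have hle : D * q ^ k ≤ D * q ^ t :=
      Nat.mul_le_mul_left _ (Nat.pow_le_pow_right (by omega) (by omega))
    rw [Nat.mod_eq_of_lt (hle.trans_lt hcN)]
    exact ⟨Nat.mul_pos hD0 (Nat.pow_pos (by omega)), hle⟩
  · have hlamD : (u + 1) * (D * q ^ (t + 1)) = (u + 1) * (u * N) + (q ^ (t + 1) + u) := by
      rw [← mul_assoc, hD]
      have : q ^ (t + 2) = q ^ (t + 1) * q := pow_succ q (t + 1)
      nlinarith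
    obtain ⟨E, hE⟩ : ∃ E, D * q ^ (t + 1) = u * N + E :=
      Nat.exists_eq_add_of_le (Nat.le_of_mul_le_mul_left (c := u + 1)
        (by rw [hlamD]; exact Nat.le_add_right _ _) (by omega))
    have hlamE : (u + 1) * E = q ^ (t + 1) + u := by nlinarith
    have hX : 1 ≤ q ^ (t + 1) := Nat.one_le_pow _ _ (by omega)
    have hEc : E ≤ D * q ^ t := by
      have hc : (u + 1) * (D * q ^ t) = u * q ^ (t + 1) + q ^ t := by
        rw [← mul_assoc, hD, pow_succ]; ring
      refine Nat.le_of_mul_le_mul_left (c := u + 1) ?_ (by omega)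
      nlinarith
    rw [hE, add_comm, Nat.add_mul_mod_self_right, Nat.mod_eq_of_lt (hEc.trans_lt hcN)]
    refine ⟨Nat.pos_of_ne_zero ?_, hEc⟩
    rintro rfl
    omega

theorem stmt_8_general (q m lam : ℕ)
    (hl1 : 1 < lam) (hl2 : lam < q - 1) (hl : lam ∣ q - 1) (hm : 2 ≤ m) :
    lam ∣ (q ^ m - 1 - ((lam - 1) * q + 1) * q ^ (m - 2)) ∧
    IsCosetLeader q ((q ^ m - 1) / lam)
      ((q ^ m - 1 - ((lam - 1) * q + 1) * q ^ (m - 2)) / lam) := by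
  obtain ⟨t, rfl⟩ : ∃ t, m = t + 2 := ⟨m - 2, by omega⟩
  have hlq : lam < q := by omega
  obtain ⟨N, hN⟩ := hl.trans (Nat.sub_one_dvd_pow_sub_one q (t + 2))
  obtain ⟨k, hk⟩ := hl
  have hD : lam * ((lam - 1) * k + 1) = (lam - 1) * q + 1 := by
    obtain ⟨u, rfl⟩ : ∃ u, lam = u + 1 := ⟨lam - 1, by omega⟩
    obtain ⟨p, rfl⟩ : ∃ p, q = p + 1 := ⟨q - 1, by omega⟩
    simp only [Nat.add_sub_cancel] at hk ⊢
    rw [hk]; ring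
  have hN' : lam * N + 1 = q ^ (t + 2) := by
    have : 1 ≤ q ^ (t + 2) := Nat.one_le_pow _ _ (by omega)
    omega
  set D := (lam - 1) * k + 1
  have hcN := mul_pow_lt hlq hN' hD
  have hexpr : q ^ (t + 2) - 1 - ((lam - 1) * q + 1) * q ^ (t + 2 - 2) = lam * (N - D * q ^ t) := by
    rw [Nat.add_sub_cancel, ← hD, hN, Nat.mul_sub, mul_assoc]
  rw [hexpr, hN, Nat.mul_div_cancel_left _ (by omega), Nat.mul_div_cancel_left _ (by omega)]
  have hper : q ^ (t + 2) ≡ 1 [MOD N] := by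
    rw [← hN', Nat.ModEq, Nat.mul_add_mod_self_right]
  refine ⟨dvd_mul_right _ _, isCosetLeader_sub hcN.le fun j => ?_⟩
  rw [mul_assoc, ← pow_add, mul_pow_modEq_mul_pow_mod hper]
  exact mul_pow_mod_mem_Ioc hl1 hlq hN' hD (Nat.mod_lt _ (by omega))

theorem stmt_8 (q m lam : ℕ) (hq : IsPrimePow q) (hq3 : 3 < q)
    (hl1 : 1 < lam) (hl2 : lam < q - 1) (hl : lam ∣ q - 1) (hm : 2 ≤ m) :
    lam ∣ (q ^ m - 1 - ((lam - 1) * q + 1) * q ^ (m - 2)) ∧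
    IsCosetLeader q ((q ^ m - 1) / lam)
      ((q ^ m - 1 - ((lam - 1) * q + 1) * q ^ (m - 2)) / lam) :=
  stmt_8_general q m lam hl1 hl2 hl hm
end

section
/- Let q ≥ 2 be a prime power, m ≥ 2, and λ a proper divisor of q - 1 (λ | q - 1 and λ ≠ q - 1). Then n - q^(m-1) is a q-cyclotomic coset leader modulo n, where n = (q^m - 1)/λ. -/
theorem Nat.pow_modEq_pow_mod {q m N : ℕ} (h : q ^ m ≡ 1 [MOD N]) (k : ℕ) :
    q ^ k ≡ q ^ (k % m) [MOD N] := by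
  calc q ^ k = (q ^ m) ^ (k / m) * q ^ (k % m) := by rw [← pow_mul, ← pow_add, Nat.div_add_mod]
    _ ≡ 1 ^ (k / m) * q ^ (k % m) [MOD N] := (h.pow _).mul_right _
    _ = q ^ (k % m) := by rw [one_pow, one_mul]

theorem Nat.sub_mul_modEq_sub {N a b c : ℕ} (ha : a ≤ N) (hb : b ≤ N) (h : a * c ≡ b [MOD N]) :
    (N - a) * c ≡ N - b [MOD N] := by
  refine Nat.ModEq.add_right_cancel h ?_
  rw [← Nat.add_mul, Nat.sub_add_cancel ha, Nat.sub_add_cancel hb]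
  exact (Nat.modEq_zero_iff_dvd.mpr (dvd_mul_right N c)).trans
    (Nat.modEq_zero_iff_dvd.mpr dvd_rfl).symm

theorem isCosetLeader_sub_pow_pred {q m N : ℕ} (hq : 0 < q) (hm : 0 < m)
    (hqm : q ^ m ≡ 1 [MOD N]) (hlt : q ^ (m - 1) < N) :
    IsCosetLeader q N (N - q ^ (m - 1)) := by
  have hpos : ∀ r, 0 < q ^ r := fun r => Nat.pow_pos hq
  refine isCosetLeader_of_forall_le (Nat.sub_lt (hlt.trans' (hpos _)) (hpos _)) fun j => ?_
  set r := (m - 1 + j) % m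
  have hr : r ≤ m - 1 := Nat.le_pred_of_lt (Nat.mod_lt _ hm)
  have hqr : q ^ r ≤ q ^ (m - 1) := Nat.pow_le_pow_right hq hr
  have hmul : (N - q ^ (m - 1)) * q ^ j % N = N - q ^ r := by
    have hcong : q ^ (m - 1) * q ^ j ≡ q ^ r [MOD N] := by
      rw [← pow_add]; exact Nat.pow_modEq_pow_mod hqm _
    rw [Nat.sub_mul_modEq_sub hlt.le (hqr.trans hlt.le) hcong]
    exact Nat.mod_eq_of_lt (Nat.sub_lt (hlt.trans' (hpos _)) (hpos _))
  rw [hmul]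
  exact Nat.sub_le_sub_left hqr N

theorem pow_pred_lt_pow_sub_one_div {q m lam : ℕ} (hm : 0 < m) (hl : lam + 1 < q)
    (hdvd : lam ∣ q ^ m - 1) : q ^ (m - 1) < (q ^ m - 1) / lam := by
  rcases Nat.eq_zero_or_pos lam with rfl | hl0
  · have := Nat.one_lt_pow hm.ne' (by omega : 1 < q)
    rw [Nat.zero_dvd] at hdvd; omega
  rw [Nat.lt_div_iff_mul_lt' hdvd]
  have hqm : q ^ m = q * q ^ (m - 1) := by rw [← pow_succ', Nat.sub_add_cancel hm]
  have hpos : 0 < q ^ (m - 1) := Nat.pow_pos (by omega)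
  have : lam * q ^ (m - 1) + 2 * q ^ (m - 1) ≤ q * q ^ (m - 1) := by
    rw [← Nat.add_mul]; exact Nat.mul_le_mul_right _ hl
  omega

theorem stmt_11_general (q m lam : ℕ) (hq2 : 2 ≤ q) (hm : 2 ≤ m)
    (hl : lam ∣ q - 1) (hl' : lam ≠ q - 1) :
    IsCosetLeader q ((q ^ m - 1) / lam) ((q ^ m - 1) / lam - q ^ (m - 1)) := by
  have hlt : lam + 1 < q := by
    have := Nat.le_of_dvd (by omega) hl; omega
  have hdvd : lam ∣ q ^ m - 1 := hl.trans (by simpa using Nat.sub_dvd_pow_sub_pow q 1 m)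
  have hqm : q ^ m ≡ 1 [MOD (q ^ m - 1) / lam] :=
    ((Nat.modEq_iff_dvd' (Nat.one_le_pow _ _ (by omega))).mpr (Nat.div_dvd_of_dvd hdvd)).symm
  exact isCosetLeader_sub_pow_pred (by omega) (by omega) hqm
    (pow_pred_lt_pow_sub_one_div (by omega) hlt hdvd)

theorem stmt_11 (q m lam : ℕ) (hq : IsPrimePow q) (hq2 : 2 ≤ q) (hm : 2 ≤ m)
    (hl : lam ∣ q - 1) (hl' : lam ≠ q - 1) :
    IsCosetLeader q ((q ^ m - 1) / lam) ((q ^ m - 1) / lam - q ^ (m - 1)) :=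
  stmt_11_general q m lam hq2 hm hl hl'
end

section
/- Let q be a prime power, s, m positive integers with s | m and m/s ≥ 3, and set n = (q^m - 1)/(q^s - 1). For 1 ≤ t ≤ m/s - 2, the element n - (q^(m-ts) - 1)/(q^s - 1) lies in the q-cyclotomic coset modulo n of (q^(ts) - 1)/(q^s - 1). -/
lemma aux_dvd (q s r : ℕ) : (q ^ s - 1) ∣ (q ^ (s * r) - 1) := by
  have := Nat.sub_dvd_pow_sub_pow (q ^ s) 1 r
  simpa [pow_mul] using this

theorem stmt_13 (q s m t : ℕ) (hq : IsPrimePow q) (hs : 0 < s) (hsm : s ∣ m)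
    (hms : 3 ≤ m / s) (ht1 : 1 ≤ t) (ht2 : t ≤ m / s - 2) :
    (q ^ m - 1) / (q ^ s - 1) - (q ^ (m - t * s) - 1) / (q ^ s - 1) ∈
      qCoset q ((q ^ m - 1) / (q ^ s - 1)) ((q ^ (t * s) - 1) / (q ^ s - 1)) := by
  have hq2 : 2 ≤ q := hq.two_le
  obtain ⟨k, hk⟩ := hsm
  have hkdiv : m / s = k := by rw [hk, Nat.mul_div_cancel_left _ hs]
  rw [hkdiv] at hms ht2
  have htk : t ≤ k - 2 := ht2
  have hts : t * s ≤ m := by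
    rw [hk]; calc t * s ≤ k * s := by exact Nat.mul_le_mul_right s (by omega)
    _ = s * k := Nat.mul_comm _ _
  have hmts : m - t * s = s * (k - t) := by
    rw [hk, Nat.mul_sub, Nat.mul_comm t s]
  have hd1 : 1 ≤ q ^ s - 1 := by
    have : 2 ≤ q ^ s := by
      calc 2 = 2 ^ 1 := rfl
      _ ≤ q ^ s := Nat.pow_le_pow_left hq2 s |>.trans' (Nat.pow_le_pow_right (by omega) hs) |>.trans (le_refl _)
    omega
  set d := q ^ s - 1 with hd
  obtain ⟨A, hA⟩ : d ∣ q ^ m - 1 := by rw [hk]; exact aux_dvd q s k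
  obtain ⟨B, hB⟩ : d ∣ q ^ (m - t * s) - 1 := by rw [hmts]; exact aux_dvd q s (k - t)
  obtain ⟨C, hC⟩ : d ∣ q ^ (t * s) - 1 := by
    rw [mul_comm]; exact aux_dvd q s t
  have hdpos : 0 < d := hd1
  have hAv : (q ^ m - 1) / d = A := by rw [hA, Nat.mul_div_cancel_left _ hdpos]
  have hBv : (q ^ (m - t * s) - 1) / d = B := by rw [hB, Nat.mul_div_cancel_left _ hdpos]
  have hCv : (q ^ (t * s) - 1) / d = C := by rw [hC, Nat.mul_div_cancel_left _ hdpos]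
  -- powers
  have h1 : 1 ≤ q ^ (t * s) := Nat.one_le_pow _ _ (by omega)
  have h2 : 1 ≤ q ^ (m - t * s) := Nat.one_le_pow _ _ (by omega)
  have h3 : q ^ (m - t * s) ≤ q ^ m := Nat.pow_le_pow_right (by omega) (by omega)
  have hsplit : q ^ (t * s) * q ^ (m - t * s) = q ^ m := by
    rw [← pow_add]; congr 1; omega
  have hB1 : 1 ≤ B := by
    have : d ≤ q ^ (m - t * s) - 1 := by
      have : q ^ s ≤ q ^ (m - t * s) := Nat.pow_le_pow_right (by omega) (by
        rw [hmts]; calc s = s * 1 := (Nat.mul_one s).symm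
        _ ≤ s * (k - t) := Nat.mul_le_mul_left s (by omega))
      omega
    nlinarith [hB]
  have hBA : B ≤ A := by
    have : d * B ≤ d * A := by rw [← hA, ← hB]; omega
    exact Nat.le_of_mul_le_mul_left this hdpos
  have hA1 : 1 ≤ A := le_trans hB1 hBA
  -- key identity
  have hkey : C * q ^ (m - t * s) = A - B := by
    have hmul : (C * q ^ (m - t * s)) * d = (A - B) * d := by
      have lhs : (C * q ^ (m - t * s)) * d = (q ^ (t * s) - 1) * q ^ (m - t * s) := by
        rw [hC]; ring
      have rhs : (A - B) * d = (q ^ m - 1) - (q ^ (m - t * s) - 1) := by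
        rw [Nat.sub_mul, mul_comm A d, mul_comm B d, ← hA, ← hB]
      rw [lhs, rhs, Nat.sub_mul, one_mul, hsplit]
      omega
    exact Nat.eq_of_mul_eq_mul_right hdpos hmul
  refine ⟨m - t * s, ?_⟩
  rw [hAv, hBv, hCv, hkey, Nat.mod_eq_of_lt (by omega)]
end

section
/- Let q > 3 be a prime power and λ an integer with 1 < λ < q - 1 and λ | q - 1, and m ≥ 2. The coset leader of the q-cyclotomic coset of q^m - q - λ modulo q^m - 1 equals q^m - (λ-1)·q^(m-1) - 2 if λ > 2, and equals q^m - q^(m-1) - q^(m-2) - 1 if λ = 2 (and m ≥ 3). -/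
lemma mod_val (q lam m i : ℕ) (hq : 4 ≤ q) (hl1 : 2 ≤ lam) (hl2 : lam + 2 ≤ q)
    (hi : i + 2 ≤ m) :
    (q ^ m - q - lam) * q ^ i % (q ^ m - 1)
      = q ^ m - 1 - q ^ (i + 1) - (lam - 1) * q ^ i := by
  have hA1 : 1 ≤ q ^ i := Nat.one_le_pow _ _ (by omega)
  have hle : q ^ (i + 2) ≤ q ^ m := Nat.pow_le_pow_right (by omega) hi
  have hbound : 1 + q ^ (i + 1) + (lam - 1) * q ^ i ≤ q ^ m := by
    refine le_trans ?_ hle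
    have h2 : q ^ (i + 2) = q ^ i * (q * q) := by ring
    have h1 : q ^ (i + 1) = q ^ i * q := by ring
    obtain ⟨l, rfl⟩ : ∃ l, lam = l + 2 := ⟨lam - 2, by omega⟩
    have hql : l + 4 ≤ q := by omega
    rw [h1, h2, show l + 2 - 1 = l + 1 by omega]
    nlinarith [hA1, mul_le_mul_of_nonneg_left hql (Nat.zero_le (q ^ i)),
      Nat.mul_le_mul_right (q ^ i * q) hq]
  have h2m : q * q ≤ q ^ m := by
    rw [← pow_two]; exact Nat.pow_le_pow_right (by omega) (by omega)
  have hq4 : 4 * q ≤ q * q := Nat.mul_le_mul_right q hq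
  have hqm : q + lam ≤ q ^ m := by omega
  have hsub1 : q ≤ q ^ m := by omega
  have hsub2 : lam ≤ q ^ m - q := by omega
  have hsub3 : 1 ≤ q ^ m := by omega
  have hsub4 : q ^ (i + 1) ≤ q ^ m - 1 := by omega
  have hsub5 : (lam - 1) * q ^ i ≤ q ^ m - 1 - q ^ (i + 1) := by omega
  have hlam1 : 1 ≤ lam := by omega
  have key : (q ^ m - q - lam) * q ^ i
      = (q ^ m - 1 - q ^ (i + 1) - (lam - 1) * q ^ i) + (q ^ m - 1) * (q ^ i - 1) := by
    have hb2 : 1 + (q ^ (i + 1) + (lam - 1) * q ^ i) ≤ q ^ m := by omega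
    have hb3 : 1 + q ^ (i + 1) ≤ q ^ m := by omega
    zify [hqm, hb2, hb3, hsub1, hsub2, hsub3, hsub4, hsub5, hA1, hlam1]
    ring
  rw [key, Nat.add_mul_mod_self_left]
  have hX : 1 ≤ q ^ (i + 1) := Nat.one_le_pow _ _ (by omega)
  have h1 := hbound
  generalize (lam - 1) * q ^ i = Y at h1 ⊢
  generalize q ^ (i + 1) = X at h1 hX ⊢
  generalize q ^ m = B at h1 ⊢
  exact Nat.mod_eq_of_lt (by omega)

lemma mod_top (q lam m : ℕ) (hq : 4 ≤ q) (hl1 : 2 ≤ lam) (hl2 : lam + 2 ≤ q)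
    (hm : 2 ≤ m) :
    (q ^ m - q - lam) * q ^ (m - 1) % (q ^ m - 1)
      = q ^ m - (lam - 1) * q ^ (m - 1) - 2 := by
  obtain ⟨n, rfl⟩ : ∃ n, m = n + 1 := ⟨m - 1, by omega⟩
  rw [show n + 1 - 1 = n from rfl]
  have hn1 : 1 ≤ n := by omega
  have hA2 : 4 ≤ q ^ n := le_trans hq (le_trans (Nat.le_self_pow (by omega) q)
    (Nat.pow_le_pow_right (by omega) hn1))
  have hbound : (lam - 1) * q ^ n + 2 ≤ q ^ (n + 1) := by
    obtain ⟨l, rfl⟩ : ∃ l, lam = l + 2 := ⟨lam - 2, by omega⟩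
    have hql : l + 4 ≤ q := by omega
    rw [show l + 2 - 1 = l + 1 by omega, pow_succ]
    nlinarith [mul_le_mul_of_nonneg_left hql (Nat.zero_le (q ^ n)), hA2]
  have hqlam : q + lam ≤ q ^ (n + 1) := by
    have h2m : q * q ≤ q ^ (n + 1) := by
      rw [← pow_two]; exact Nat.pow_le_pow_right (by omega) (by omega)
    have hq4 : 4 * q ≤ q * q := Nat.mul_le_mul_right q hq
    omega
  have hlam1 : 1 ≤ lam := by omega
  have key : (q ^ (n + 1) - q - lam) * q ^ n
      = (q ^ (n + 1) - (lam - 1) * q ^ n - 2) + (q ^ (n + 1) - 1) * (q ^ n - 2) := by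
    have hc1 : q ≤ q ^ (n + 1) := by omega
    have hc2 : lam ≤ q ^ (n + 1) - q := by omega
    have hc3 : 1 ≤ q ^ (n + 1) := by omega
    have hc4 : (lam - 1) * q ^ n ≤ q ^ (n + 1) := by omega
    have hc5 : 2 ≤ q ^ (n + 1) - (lam - 1) * q ^ n := by
      have h := hbound
      generalize (lam - 1) * q ^ n = Y at h ⊢
      omega
    have hc6 : 2 ≤ q ^ n := by omega
    zify [hqlam, hbound, hc1, hc2, hc3, hc4, hc5, hc6, hlam1]
    ring
  rw [key, Nat.add_mul_mod_self_left]
  have h1 := hbound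
  generalize (lam - 1) * q ^ n = Y at h1 ⊢
  exact Nat.mod_eq_of_lt (by omega)

lemma mod_period (q m a j : ℕ) (hN : 1 ≤ q ^ m - 1) :
    a * q ^ j % (q ^ m - 1) = a * q ^ (j % m) % (q ^ m - 1) := by
  have hq1 : 1 ≤ q ^ m := le_trans hN (Nat.sub_le _ _)
  have hpm : q ^ m ≡ 1 [MOD q ^ m - 1] := by
    unfold Nat.ModEq
    conv_lhs => rw [show q ^ m = (q ^ m - 1) + 1 by omega]
    exact Nat.add_mod_left _ _
  conv_lhs => rw [show j = m * (j / m) + j % m by rw [Nat.div_add_mod]]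
  have : a * q ^ (m * (j / m) + j % m) ≡ a * q ^ (j % m) [MOD q ^ m - 1] := by
    rw [pow_add, pow_mul]
    calc a * ((q ^ m) ^ (j / m) * q ^ (j % m))
        ≡ a * (1 ^ (j / m) * q ^ (j % m)) [MOD q ^ m - 1] :=
          (((hpm.pow _).mul_right _).mul_left _)
      _ = a * q ^ (j % m) := by ring
  exact this

theorem stmt_16 (q m lam : ℕ) (hq : IsPrimePow q) (hq3 : 3 < q)
    (hl1 : 1 < lam) (hl2 : lam < q - 1) (hl : lam ∣ q - 1) (hm : 2 ≤ m) :
    (2 < lam →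
      cosetLeader q (q ^ m - 1) (q ^ m - q - lam) = q ^ m - (lam - 1) * q ^ (m - 1) - 2) ∧
    (lam = 2 → 3 ≤ m →
      cosetLeader q (q ^ m - 1) (q ^ m - q - lam) = q ^ m - q ^ (m - 1) - q ^ (m - 2) - 1) := by
  have hq4 : 4 ≤ q := hq3
  have hlq : lam + 2 ≤ q := by omega
  obtain ⟨n, rfl⟩ : ∃ n, m = n + 2 := ⟨m - 2, by omega⟩
  have h16 : 16 ≤ q ^ (n + 2) := by
    calc (16 : ℕ) = 4 ^ 2 := by norm_num
    _ ≤ q ^ 2 := Nat.pow_le_pow_left hq4 2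
    _ ≤ q ^ (n + 2) := Nat.pow_le_pow_right (by omega) (by omega)
  have hN1 : 1 ≤ q ^ (n + 2) - 1 := by omega
  have e1 : n + 2 - 1 = n + 1 := by omega
  have e2 : n + 2 - 2 = n := by omega
  rw [e1, e2]
  unfold cosetLeader
  constructor
  · intro hlam3
    have hne : (qCoset q (q ^ (n + 2) - 1) (q ^ (n + 2) - q - lam)).Nonempty :=
      ⟨_, ⟨0, rfl⟩⟩
    apply le_antisymm
    · apply Nat.sInf_le
      have ht := mod_top q lam (n + 2) hq4 hl1 hlq (by omega)
      rw [e1] at ht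
      exact ⟨n + 1, ht.symm⟩
    · apply le_csInf hne
      rintro b ⟨j, rfl⟩
      rw [mod_period _ _ _ _ hN1]
      have hjm : j % (n + 2) < n + 2 := Nat.mod_lt _ (by omega)
      by_cases hc : j % (n + 2) = n + 1
      · rw [hc, show n + 1 = (n + 2) - 1 by omega,
          mod_top q lam (n + 2) hq4 hl1 hlq (by omega), e1]
      · set i := j % (n + 2) with hidef
        have hi : i + 2 ≤ n + 2 := by omega
        rw [mod_val q lam (n + 2) i hq4 hl1 hlq hi]
        have h1 : q ^ (i + 1) ≤ q ^ (n + 1) := Nat.pow_le_pow_right (by omega) (by omega)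
        have h2 : (lam - 1) * q ^ i ≤ (lam - 1) * q ^ n :=
          Nat.mul_le_mul_left _ (Nat.pow_le_pow_right (by omega) (by omega))
        have h3 : q ^ (n + 1) + (lam - 1) * q ^ n + 1 ≤ (lam - 1) * q ^ (n + 1) + 2 := by
          obtain ⟨l, rfl⟩ : ∃ l, lam = l + 3 := ⟨lam - 3, by omega⟩
          rw [show l + 3 - 1 = l + 2 by omega, pow_succ]
          have hP : 1 ≤ q ^ n := Nat.one_le_pow _ _ (by omega)
          nlinarith [mul_le_mul_of_nonneg_left (show 4 ≤ q from hq4) (Nat.zero_le (q ^ n)), hP]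
        have hXY : q ^ (i + 1) + (lam - 1) * q ^ i + 1 ≤ (lam - 1) * q ^ (n + 1) + 2 := by
          omega
        generalize q ^ (i + 1) = X at hXY ⊢
        generalize (lam - 1) * q ^ i = Y at hXY ⊢
        generalize (lam - 1) * q ^ (n + 1) = Z at hXY ⊢
        generalize q ^ (n + 2) = B
        omega
  · intro hlam2 h3m
    subst hlam2
    have hn1 : 1 ≤ n := by omega
    have hq1 : 1 ≤ q ^ n := Nat.one_le_pow _ _ (by omega)
    have hq2 : q ^ (n + 1) = q * q ^ n := by ring
    have hq3' : q ^ (n + 2) = q * (q * q ^ n) := by ring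
    have hne : (qCoset q (q ^ (n + 2) - 1) (q ^ (n + 2) - q - 2)).Nonempty :=
      ⟨_, ⟨0, rfl⟩⟩
    apply le_antisymm
    · apply Nat.sInf_le
      have hv := mod_val q 2 (n + 2) n hq4 hl1 hlq (by omega)
      rw [show (2 : ℕ) - 1 = 1 by omega, one_mul] at hv
      refine ⟨n, ?_⟩
      rw [hv]
      generalize q ^ (n + 1) = X
      generalize q ^ n = Y
      generalize q ^ (n + 2) = B
      omega
    · apply le_csInf hne
      rintro b ⟨j, rfl⟩
      rw [mod_period _ _ _ _ hN1]
      have hjm : j % (n + 2) < n + 2 := Nat.mod_lt _ (by omega)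
      by_cases hc : j % (n + 2) = n + 1
      · rw [hc, show n + 1 = (n + 2) - 1 by omega,
          mod_top q 2 (n + 2) hq4 hl1 hlq (by omega), e1]
        rw [show (2 : ℕ) - 1 = 1 by omega, one_mul]
        generalize q ^ (n + 1) = X
        have hY := hq1
        generalize q ^ n = Y at hY
        generalize q ^ (n + 2) = B
        omega
      · set i := j % (n + 2) with hidef
        have hi : i + 2 ≤ n + 2 := by omega
        rw [mod_val q 2 (n + 2) i hq4 hl1 hlq hi]
        rw [show (2 : ℕ) - 1 = 1 by omega, one_mul]
        have h1 : q ^ (i + 1) ≤ q ^ (n + 1) := Nat.pow_le_pow_right (by omega) (by omega)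
        have h2 : q ^ i ≤ q ^ n := Nat.pow_le_pow_right (by omega) (by omega)
        generalize q ^ (i + 1) = X at h1 ⊢
        generalize q ^ i = Y at h2 ⊢
        generalize q ^ (n + 1) = Z at h1 h2 ⊢
        generalize q ^ n = W at h2 ⊢
        generalize q ^ (n + 2) = B
        omega
end

section
/- Let q be an odd prime power and m ≥ 2. Then the two largest q-cyclotomic coset leaders modulo (q^m - 1)/2 are ((q-1)·q^(m-1) - q^⌊(m-1)/2⌋ - 1)/2 and ((q-1)·q^(m-1) - q^⌊(m+1)/2⌋ - 1)/2; in particular both are coset leaders, the first is the maximum coset leader, and no coset leader lies strictly between them. -/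
lemma isCosetLeader_iff (q N a : ℕ) (hN : 0 < N) :
    IsCosetLeader q N a ↔ a < N ∧ ∀ j : ℕ, a ≤ a * q ^ j % N := by
  rw [IsCosetLeader, cosetLeader]
  constructor
  · intro h
    have hne : (qCoset q N a).Nonempty := ⟨a % N, 0, by simp⟩
    have hmem := Nat.sInf_mem hne
    rw [← h] at hmem
    have hle : ∀ b ∈ qCoset q N a, a ≤ b := by
      intro b hb; have := Nat.sInf_le hb; rw [← h] at this; exact this
    have h0 : a ≤ a % N := hle _ ⟨0, by simp⟩
    have h1 : a % N = a := le_antisymm (Nat.mod_le a N) h0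
    refine ⟨by rw [← h1]; exact Nat.mod_lt a hN, fun j => hle _ ⟨j, rfl⟩⟩
  · rintro ⟨h1, h2⟩
    have : IsLeast (qCoset q N a) a := ⟨⟨0, by simp [Nat.mod_eq_of_lt h1]⟩,
      fun b hb => by obtain ⟨j, rfl⟩ := hb; exact h2 j⟩
    exact (this.csInf_eq).symm

lemma pow_mod_aux (q m : ℕ) (hq : 3 ≤ q) (hm : 2 ≤ m) (a : ℕ) :
    q ^ a % (q ^ m - 1) = q ^ (a % m) := by
  set n := q ^ m - 1 with hn
  have hqm : 1 ≤ q ^ m := Nat.one_le_pow _ _ (by omega)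
  have hmod : q ^ m ≡ 1 [MOD n] := by
    rw [Nat.ModEq.comm, Nat.modEq_iff_dvd' hqm]
  have hsplit : q ^ a = (q ^ m) ^ (a / m) * q ^ (a % m) := by
    rw [← pow_mul, ← pow_add, Nat.div_add_mod]
  have h1 : q ^ a ≡ q ^ (a % m) [MOD n] := by
    calc q ^ a = (q ^ m) ^ (a / m) * q ^ (a % m) := hsplit
    _ ≡ 1 ^ (a / m) * q ^ (a % m) [MOD n] := ((hmod.pow _).mul_right _)
    _ = q ^ (a % m) := by ring
  have hlt : q ^ (a % m) < n := by
    have h2 : a % m ≤ m - 1 := by have := Nat.mod_lt a (show 0 < m by omega); omega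
    have h3 : q ^ (a % m) ≤ q ^ (m - 1) := Nat.pow_le_pow_right (by omega) h2
    have h4 : q ^ m = q * q ^ (m - 1) := by
      rw [← pow_succ']; congr 1; omega
    have h5 : 1 ≤ q ^ (m - 1) := Nat.one_le_pow _ _ (by omega)
    have : 3 * q ^ (m-1) ≤ q * q ^ (m-1) := Nat.mul_le_mul_right _ hq
    omega
  rw [Nat.ModEq] at h1
  rw [h1, Nat.mod_eq_of_lt hlt]

lemma flip_mod (q m : ℕ) (hq : 3 ≤ q) (hm : 2 ≤ m) {s : ℕ} (hs1 : 1 ≤ s)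
    (hs2 : s < q ^ m - 1) (j : ℕ) :
    (q ^ m - 1 - s) * q ^ j % (q ^ m - 1) = (q ^ m - 1) - s * q ^ j % (q ^ m - 1) := by
  set n := q ^ m - 1 with hn
  have hqm : 9 ≤ q ^ m := by
    calc (9:ℕ) = 3 ^ 2 := by norm_num
    _ ≤ q ^ 2 := Nat.pow_le_pow_left hq 2
    _ ≤ q ^ m := Nat.pow_le_pow_right (by omega) hm
  have hnpos : 0 < n := by omega
  have hcop : Nat.Coprime n (q ^ j) := by
    have h1 : Nat.Coprime (q ^ m) n := by
      rw [show q ^ m = 1 + n by omega]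
      exact Nat.coprime_add_self_left.mpr (Nat.coprime_one_left n)
    have h2 : Nat.Coprime q n := (Nat.coprime_pow_left_iff (show 0 < m by omega) q n).mp h1
    exact (h2.symm).pow_right _
  set u := s * q ^ j % n with hu
  have hult : u < n := Nat.mod_lt _ hnpos
  have hupos : 0 < u := by
    rcases Nat.eq_zero_or_pos u with h | h
    · exfalso
      have hdvd : n ∣ s * q ^ j := Nat.dvd_of_mod_eq_zero h
      have h3 : n ∣ s := hcop.dvd_of_dvd_mul_right hdvd
      have := Nat.le_of_dvd (by omega) h3
      omega
    · exact h
  have h₁ : s * q ^ j ≡ u [MOD n] := (Nat.mod_modEq _ _).symm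
  have h₂ : (n - s) * q ^ j + s * q ^ j ≡ (n - u) + u [MOD n] := by
    have e1 : (n - s) * q ^ j + s * q ^ j = n * q ^ j := by
      rw [← Nat.add_mul]; congr 1; omega
    have e2 : (n - u) + u = n := by omega
    rw [e1, e2]
    calc n * q ^ j ≡ 0 * q ^ j [MOD n] := (Nat.modEq_zero_iff_dvd.mpr dvd_rfl).mul_right _
    _ = 0 := by ring
    _ ≡ n [MOD n] := (Nat.modEq_zero_iff_dvd.mpr dvd_rfl).symm
  have h₃ : (n - s) * q ^ j ≡ n - u [MOD n] := h₁.add_right_cancel h₂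
  rw [Nat.ModEq] at h₃
  rw [h₃, Nat.mod_eq_of_lt (by omega)]

lemma two_small (q m : ℕ) (hq : 3 ≤ q) (hm : 2 ≤ m) {a b : ℕ} (ha : a ≤ m-2) (hb : b ≤ m-2) :
    q ^ a + q ^ b ≤ q ^ (m-1) := by
  have h1 : q ^ a ≤ q ^ (m-2) := Nat.pow_le_pow_right (by omega) ha
  have h2 : q ^ b ≤ q ^ (m-2) := Nat.pow_le_pow_right (by omega) hb
  have h3 : q ^ (m-1) = q * q ^ (m-2) := by rw [← pow_succ']; congr 1; omega
  have h4 : 3 * q ^ (m-2) ≤ q * q ^ (m-2) := Nat.mul_le_mul_right _ hq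
  omega

lemma maxcoset (q m : ℕ) (hq : 3 ≤ q) (hm : 2 ≤ m) {g : ℕ} (hgm : g ≤ m - 1)
    (hg2 : m - 2 ≤ 2 * g) (j : ℕ) :
    (q ^ (m-1) + q ^ g) * q ^ j % (q ^ m - 1) ≤ q ^ (m-1) + q ^ g := by
  set n := q ^ m - 1 with hn
  have hexp : (q ^ (m-1) + q ^ g) * q ^ j = q ^ (m-1+j) + q ^ (g+j) := by
    rw [Nat.add_mul, ← pow_add, ← pow_add]
  rw [hexp, Nat.add_mod, pow_mod_aux q m hq hm, pow_mod_aux q m hq hm]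
  have key : q ^ ((m-1+j) % m) + q ^ ((g+j) % m) ≤ q ^ (m-1) + q ^ g := by
    have hmpos : 0 < m := by omega
    have hj'lt : j % m < m := Nat.mod_lt _ hmpos
    set j' := j % m with hj'
    have ha' : (m-1+j) % m = (m-1+j') % m := by
      conv_lhs => rw [Nat.add_mod]
      rw [Nat.mod_eq_of_lt (show m-1 < m by omega), hj']
    have hb' : (g+j) % m = (g+j') % m := by
      conv_lhs => rw [Nat.add_mod]
      rw [Nat.mod_eq_of_lt (show g < m by omega), hj']
    rw [ha', hb']
    rcases Nat.eq_zero_or_pos j' with h0 | hpos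
    · rw [h0, Nat.mod_eq_of_lt (show m-1+0 < m by omega),
        Nat.mod_eq_of_lt (show g+0 < m by omega)]
      simp
    · have haval : (m-1+j') % m = j' - 1 := by
        rw [Nat.mod_eq_sub_mod (by omega), show m-1+j'-m = j'-1 by omega,
          Nat.mod_eq_of_lt (by omega)]
      rw [haval]
      rcases Nat.lt_or_ge (g + j') m with h1 | h1
      · have hbval : (g+j') % m = g + j' := Nat.mod_eq_of_lt h1
        rw [hbval]
        rcases Nat.lt_or_ge (g + j') (m-1) with h2 | h2
        · have := two_small q m hq hm (show j'-1 ≤ m-2 by omega) (show g+j' ≤ m-2 by omega)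
          have hgp : 1 ≤ q ^ g := Nat.one_le_pow _ _ (by omega)
          omega
        · -- g + j' = m - 1
          have h3 : g + j' = m - 1 := by omega
          have h4 : q ^ (j'-1) ≤ q ^ g := Nat.pow_le_pow_right (by omega) (by omega)
          rw [h3]
          omega
      · have hbval : (g+j') % m = g + j' - m := by
          rw [Nat.mod_eq_sub_mod (by omega), Nat.mod_eq_of_lt (by omega)]
        rw [hbval]
        have := two_small q m hq hm (show j'-1 ≤ m-2 by omega) (show g+j'-m ≤ m-2 by omega)
        have hgp : 1 ≤ q ^ g := Nat.one_le_pow _ _ (by omega)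
        omega
  calc (q ^ ((m-1+j) % m) + q ^ ((g+j) % m)) % n ≤ q ^ ((m-1+j) % m) + q ^ ((g+j) % m) :=
        Nat.mod_le _ _
  _ ≤ q ^ (m-1) + q ^ g := key

lemma notmax (q m : ℕ) (hq : 3 ≤ q) (hodd : Odd q) (hm : 2 ≤ m) {s : ℕ} (hs1 : 1 ≤ s)
    (hseven : Even s) (hs2 : s < q ^ (m-1) + q ^ ((m+1)/2))
    (hsne : s ≠ q ^ (m-1) + q ^ ((m-1)/2)) :
    ∃ j, s < s * q ^ j % (q ^ m - 1) := by
  set e := (m-1)/2 with he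
  set f := (m+1)/2 with hf
  have hef : f = e + 1 := by omega
  have he1 : 2*e ≤ m - 1 := by omega
  have he3 : e ≤ m - 2 := by omega
  have hfm : f ≤ m - 1 := by omega
  set n := q ^ m - 1 with hn
  have hQm : q ^ (m-1) * q = q ^ m := by rw [← pow_succ]; congr 1; omega
  have hQ1 : 1 ≤ q ^ (m-1) := Nat.one_le_pow _ _ (by omega)
  have hQm9 : 9 ≤ q ^ m := by
    calc (9:ℕ) = 3 ^ 2 := by norm_num
    _ ≤ q ^ 2 := Nat.pow_le_pow_left hq 2
    _ ≤ q ^ m := Nat.pow_le_pow_right (by omega) hm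
  rcases Nat.lt_or_ge s (q ^ (m-1)) with hcase | hcase
  · -- small s : multiply by q
    refine ⟨1, ?_⟩
    rw [pow_one]
    have h2 : (s+1) * q ≤ q ^ (m-1) * q := Nat.mul_le_mul_right _ (by omega)
    rw [hQm, Nat.add_mul, one_mul] at h2
    have h4 : s * 3 ≤ s * q := Nat.mul_le_mul_left _ hq
    have h3 : s * q % n = s * q := Nat.mod_eq_of_lt (by omega)
    rw [h3]
    omega
  · -- s = q^(m-1) + r
    set r := s - q ^ (m-1) with hr
    have hrf : r < q ^ f := by omega
    have hoddp : Odd (q ^ (m-1)) := hodd.pow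
    have hrodd : Odd r := by
      rw [Nat.odd_iff] at hoddp ⊢
      rw [Nat.even_iff] at hseven
      omega
    have hrpos : 1 ≤ r := by
      rcases Nat.eq_zero_or_pos r with h | h
      · rw [h] at hrodd; simp at hrodd
      · exact h
    set k := Nat.log q r with hk
    have hk1 : q ^ k ≤ r := Nat.pow_log_le_self q (by omega)
    have hk2 : r < q ^ (k+1) := Nat.lt_pow_succ_log_self (by omega) r
    have hkf : k < f := by
      by_contra h
      have : q ^ f ≤ q ^ k := Nat.pow_le_pow_right (by omega) (by omega)
      omega
    have hke : k ≤ e := by omega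
    have hkm : k ≤ m - 2 := by omega
    refine ⟨m-1-k, ?_⟩
    have hA1 : 1 ≤ q ^ (m-2-k) := Nat.one_le_pow _ _ (by omega)
    have hBA : q ^ (m-2-k) * q = q ^ (m-1-k) := by rw [← pow_succ]; congr 1; omega
    have hB3A : 3 * q ^ (m-2-k) ≤ q ^ (m-1-k) := by
      rw [← hBA, Nat.mul_comm (q ^ (m-2-k)) q]
      exact Nat.mul_le_mul_right _ hq
    have hBr : q ^ (m-1-k) ≤ r * q ^ (m-1-k) := Nat.le_mul_of_pos_left _ (by omega)
    -- upper bound on the rotated value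
    have hub : r * q ^ (m-1-k) + q ^ (m-1-k) ≤ q ^ m := by
      have h1 : (r+1) * q ^ (m-1-k) ≤ q ^ (k+1) * q ^ (m-1-k) :=
        Nat.mul_le_mul_right _ (by omega)
      rw [← pow_add, show (k+1)+(m-1-k) = m by omega, Nat.add_mul, one_mul] at h1
      exact h1
    have hvlt : q ^ (m-2-k) + r * q ^ (m-1-k) < n := by omega
    -- the rotation equals this value
    have hmodeq : s * q ^ (m-1-k) % n = q ^ (m-2-k) + r * q ^ (m-1-k) := by
      have hexp : s * q ^ (m-1-k) = q ^ (2*m-2-k) + r * q ^ (m-1-k) := by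
        rw [show s = q ^ (m-1) + r by omega, Nat.add_mul, ← pow_add]
        congr 2
        omega
      have hp1 : q ^ (2*m-2-k) % n = q ^ (m-2-k) := by
        rw [pow_mod_aux q m hq hm, Nat.mod_eq_sub_mod (by omega),
          show 2*m-2-k-m = m-2-k by omega, Nat.mod_eq_of_lt (by omega)]
      have hme : q ^ (2*m-2-k) ≡ q ^ (m-2-k) [MOD n] := by
        rw [Nat.ModEq, hp1, Nat.mod_eq_of_lt (show q ^ (m-2-k) < n by omega)]
      have h2 := hme.add_right (r * q ^ (m-1-k))
      rw [Nat.ModEq] at h2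
      rw [hexp, h2, Nat.mod_eq_of_lt hvlt]
    rw [hmodeq]
    -- now show s < q^(m-2-k) + r*q^(m-1-k)
    rcases Nat.lt_or_ge r (2 * q ^ k) with hsmall | hbig
    · -- r = q^k + r', r' < q^k
      set r' := r - q ^ k with hr'
      have hr'lt : r' < q ^ k := by omega
      have hoddk : Odd (q ^ k) := hodd.pow
      have hr'even : Even r' := by
        rw [Nat.odd_iff] at hoddk hrodd
        rw [Nat.even_iff]
        omega
      have hkB : q ^ k * q ^ (m-1-k) = q ^ (m-1) := by
        rw [← pow_add]; congr 1; omega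
      rcases Nat.eq_zero_or_pos r' with h0 | hpos
      · -- r = q^k, and then k ≠ e
        have hkne : k ≠ e := by
          intro hcontra
          apply hsne
          rw [← hcontra]
          omega
        have hA2 : q ^ (k+1) ≤ q ^ (m-2-k) := Nat.pow_le_pow_right (by omega) (by omega)
        have hA3 : q ^ k < q ^ (k+1) := Nat.pow_lt_pow_succ (by omega)
        have hrB : r * q ^ (m-1-k) = q ^ (m-1) := by
          rw [show r = q ^ k by omega, hkB]
        omega
      · -- r' ≥ 2 since it is even and positive
        have hr'2 : 2 ≤ r' := by
          rcases hr'even with ⟨t, ht⟩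
          omega
        have hexp2 : r * q ^ (m-1-k) = q ^ (m-1) + r' * q ^ (m-1-k) := by
          rw [show r = q ^ k + r' by omega, Nat.add_mul, hkB]
        have hBk : q ^ k ≤ q ^ (m-1-k) := Nat.pow_le_pow_right (by omega) (by omega)
        have h5 : r' * q ^ k ≤ r' * q ^ (m-1-k) := Nat.mul_le_mul_left _ hBk
        have h6 : 2 * q ^ k ≤ r' * q ^ k := Nat.mul_le_mul_right _ hr'2
        omega
    · -- r ≥ 2 q^k
      have hkB : q ^ k * q ^ (m-1-k) = q ^ (m-1) := by
        rw [← pow_add]; congr 1; omega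
      have h5 : 2 * q ^ k * q ^ (m-1-k) ≤ r * q ^ (m-1-k) :=
        Nat.mul_le_mul_right _ hbig
      have h6 : 2 * q ^ k * q ^ (m-1-k) = 2 * q ^ (m-1) := by
        rw [Nat.mul_assoc, hkB]
      have h7 : q ^ f ≤ q ^ (m-1) := Nat.pow_le_pow_right (by omega) hfm
      omega

theorem stmt_18 (q m : ℕ) (hq : IsPrimePow q) (hodd : Odd q) (hm : 2 ≤ m) :
    IsCosetLeader q ((q ^ m - 1) / 2) (((q - 1) * q ^ (m - 1) - q ^ ((m - 1) / 2) - 1) / 2) ∧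
    IsCosetLeader q ((q ^ m - 1) / 2) (((q - 1) * q ^ (m - 1) - q ^ ((m + 1) / 2) - 1) / 2) ∧
    (∀ c : ℕ, IsCosetLeader q ((q ^ m - 1) / 2) c →
      c ≤ ((q - 1) * q ^ (m - 1) - q ^ ((m - 1) / 2) - 1) / 2) ∧
    (∀ c : ℕ, ((q - 1) * q ^ (m - 1) - q ^ ((m + 1) / 2) - 1) / 2 < c →
      c < ((q - 1) * q ^ (m - 1) - q ^ ((m - 1) / 2) - 1) / 2 →
      ¬ IsCosetLeader q ((q ^ m - 1) / 2) c) := by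
  have hq3 : 3 ≤ q := by
    have h2 := hq.two_le
    rw [Nat.odd_iff] at hodd
    omega
  have hodd' : Odd q := by rw [Nat.odd_iff]; rw [Nat.odd_iff] at hodd; exact hodd
  clear hq hodd
  set e := (m-1)/2 with he
  set f := (m+1)/2 with hf
  have hef : f = e + 1 := by omega
  have he3 : e ≤ m - 2 := by omega
  have hfm : f ≤ m - 1 := by omega
  clear_value e f
  -- basic power facts
  have hQm : q * q ^ (m-1) = q ^ m := by rw [← pow_succ']; congr 1; omega
  have hQ1 : 1 ≤ q ^ (m-1) := Nat.one_le_pow _ _ (by omega)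
  have hQm9 : 9 ≤ q ^ m := by
    calc (9:ℕ) = 3 ^ 2 := by norm_num
    _ ≤ q ^ 2 := Nat.pow_le_pow_left hq3 2
    _ ≤ q ^ m := Nat.pow_le_pow_right (by omega) hm
  have hQ3 : 3 ≤ q ^ (m-1) := by
    calc (3:ℕ) = 3 ^ 1 := by norm_num
    _ ≤ q ^ 1 := Nat.pow_le_pow_left hq3 1
    _ ≤ q ^ (m-1) := Nat.pow_le_pow_right (by omega) (by omega)
  have h3Q : 3 * q ^ (m-1) ≤ q ^ m := by
    rw [← hQm]; exact Nat.mul_le_mul_right _ hq3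
  -- parity facts
  have hom : q ^ m % 2 = 1 := Nat.odd_iff.mp hodd'.pow
  have hom1 : q ^ (m-1) % 2 = 1 := Nat.odd_iff.mp hodd'.pow
  have hoe : q ^ e % 2 = 1 := Nat.odd_iff.mp hodd'.pow
  have hof : q ^ f % 2 = 1 := Nat.odd_iff.mp hodd'.pow
  have hem : q ^ (m-2) * q = q ^ (m-1) := by rw [← pow_succ]; congr 1; omega
  have h3m2 : 3 * q ^ (m-2) ≤ q ^ (m-1) := by
    rw [← hem, Nat.mul_comm]; exact Nat.mul_le_mul_left _ hq3
  have hQ2 : 1 ≤ q ^ (m-2) := Nat.one_le_pow _ _ (by omega)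
  have hee : q ^ e ≤ q ^ (m-2) := Nat.pow_le_pow_right (by omega) he3
  have hff : q ^ f ≤ q ^ (m-1) := Nat.pow_le_pow_right (by omega) hfm
  have heef : q ^ e ≤ q ^ f := Nat.pow_le_pow_right (by omega) (by omega)
  set n := q ^ m - 1 with hn
  set N := (q ^ m - 1) / 2 with hN
  have hn' : n = q ^ m - 1 := hn
  have hN' : N = (q ^ m - 1) / 2 := hN
  clear_value n N
  have hn2N : n = 2 * N := by omega
  have hNpos : 0 < N := by omega
  -- the two special values
  set s1 := q ^ (m-1) + q ^ e with hs1
  set s2 := q ^ (m-1) + q ^ f with hs2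
  have hs1' : s1 = q ^ (m-1) + q ^ e := hs1
  have hs2' : s2 = q ^ (m-1) + q ^ f := hs2
  clear_value s1 s2
  have hs1n : s1 < n := by omega
  have hs2n : s2 < n := by omega
  set a1 := (n - s1) / 2 with ha1
  set a2 := (n - s2) / 2 with ha2
  have ha1'' : a1 = (n - s1) / 2 := ha1
  have ha2'' : a2 = (n - s2) / 2 := ha2
  clear_value a1 a2
  have ha1' : 2 * a1 = n - s1 := by omega
  have ha2' : 2 * a2 = n - s2 := by omega
  -- rewrite the statement's expressions
  have hsub : (q - 1) * q ^ (m-1) = q ^ m - q ^ (m-1) := by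
    rw [Nat.sub_mul, one_mul, hQm]
  have hE1 : ((q - 1) * q ^ (m - 1) - q ^ e - 1) / 2 = a1 := by omega
  have hE2 : ((q - 1) * q ^ (m - 1) - q ^ f - 1) / 2 = a2 := by omega
  rw [hE1, hE2]
  -- correspondence between mod N and mod n
  have hcorr : ∀ c j : ℕ, 2 * (c * q ^ j % N) = (2 * c) * q ^ j % n := by
    intro c j
    rw [Nat.mul_assoc, hn2N, Nat.mul_mod_mul_left]
  -- leadership
  have hlead : ∀ g : ℕ, g ≤ m - 1 → m - 2 ≤ 2 * g →
      IsCosetLeader q N ((n - (q ^ (m-1) + q ^ g)) / 2) := by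
    intro g hg1 hg2
    have hog : q ^ g % 2 = 1 := Nat.odd_iff.mp hodd'.pow
    have hgg : q ^ g ≤ q ^ (m-1) := Nat.pow_le_pow_right (by omega) hg1
    set sg := q ^ (m-1) + q ^ g with hsg
    have hsg' : sg = q ^ (m-1) + q ^ g := hsg
    clear_value sg
    have hsgn : sg < n := by omega
    set a := (n - sg) / 2 with ha
    have ha0 : a = (n - sg) / 2 := ha
    clear_value a
    have ha' : 2 * a = n - sg := by omega
    rw [isCosetLeader_iff q N a hNpos]
    refine ⟨by omega, fun j => ?_⟩
    have h1 : (2 * a) * q ^ j % n = n - sg * q ^ j % n := by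
      rw [show 2 * a = n - sg from ha', hn']
      rw [hn'] at hsgn
      exact flip_mod q m hq3 hm (by omega) hsgn j
    have h2 := hcorr a j
    have h3 : sg * q ^ j % n ≤ sg := by
      have := maxcoset q m hq3 hm hg1 hg2 j
      rw [← hsg', ← hn'] at this
      exact this
    omega
  have hbetween : ∀ c : ℕ, IsCosetLeader q N c → a2 < c → c ≠ a1 → False := by
    intro c hc hclow hcne
    rw [isCosetLeader_iff q N c hNpos] at hc
    obtain ⟨hc1, hc2⟩ := hc
    set s := n - 2 * c with hs
    have hs0 : s = n - 2 * c := hs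
    clear_value s
    have hspos : 1 ≤ s := by omega
    have hsev : Even s := by rw [Nat.even_iff]; omega
    have hslt : s < q ^ (m-1) + q ^ f := by omega
    have hsne : s ≠ q ^ (m-1) + q ^ e := by omega
    obtain ⟨j, hj⟩ := notmax q m hq3 hodd' hm hspos hsev
      (by rw [← hf]; exact hslt) (by rw [← he]; exact hsne)
    rw [← hn'] at hj
    have hflip : (2 * c) * q ^ j % n = n - s * q ^ j % n := by
      rw [show 2 * c = n - s from by omega, hn']
      rw [hn'] at hj
      exact flip_mod q m hq3 hm hspos (by omega) j
    have h2 := hcorr c j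
    have h4 := hc2 j
    have h5 : s * q ^ j % n < n := Nat.mod_lt _ (by omega)
    omega
  refine ⟨?_, ?_, ?_, ?_⟩
  · have h := hlead e (by omega) (by omega)
    rw [← hs1'] at h
    rw [ha1'']
    exact h
  · have h := hlead f (by omega) (by omega)
    rw [← hs2'] at h
    rw [ha2'']
    exact h
  · intro c hc
    by_contra hgt
    push_neg at hgt
    exact hbetween c hc (by omega) (by omega)
  · intro c hclow hchigh hc
    exact hbetween c hc hclow (by omega)
end
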